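/- arXiv:2407.18092 — 4 statements merged into one kernel-verified Lean document; each statement's English description precedes it below -/
import Mathlib

section
/- For every PB game (P,V,B,d) and every tie-breaking order ≻ on P, there exists a BasicAV-Nash equilibrium strategy profile in which the project that BasicAV considers first (i.e., the project with the largest approval score, with ties among most-approved projects broken by ≻) reports cost B. -/
open scoped Classical

set_option linter.unusedSectionVars false
set_option linter.unusedVariables false

noncomputable section

namespace PB

variable {P V : Type} [Fintype P] [DecidableEq P] [Fintype V] [DecidableEq V]

/-- The set of voters that approve project `p`. -/
def approvers (A : V → Finset P) (p : P) : Finset V :=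
  Finset.univ.filter fun v => p ∈ A v

/-- A key whose second lexicographic component is an embedding into `ℕ` is injective. -/
lemma lexKey_inj {γ : Type} (g : P → γ) (tb : P ↪ ℕ) :
    Function.Injective fun p : P => toLex ((g p, tb p) : γ × ℕ) := by
  intro a b h
  have h2 : ((g a, tb a) : γ × ℕ) = (g b, tb b) := congrArg (fun x => ofLex x) h
  exact tb.injective (congrArg Prod.snd h2)

/-- The list of all projects, sorted increasingly by an injective key. -/
def prioList {κ : Type} [LinearOrder κ] (key : P → κ) (hk : Function.Injective key) : List P :=
  letI : DecidableRel fun p q : P => key p ≤ key q :=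
    fun a b => inferInstanceAs (Decidable (key a ≤ key b))
  letI : IsTrans P fun p q => key p ≤ key q := ⟨fun _ _ _ h1 h2 => le_trans h1 h2⟩
  letI : Std.Antisymm fun p q : P => key p ≤ key q := ⟨fun _ _ h1 h2 => hk (le_antisymm h1 h2)⟩
  letI : Std.Total fun p q : P => key p ≤ key q := ⟨fun _ _ => le_total _ _⟩
  Finset.sort Finset.univ (fun p q => key p ≤ key q)

/-- Greedy selection of projects along a list: a project is added to the winning set
whenever its cost still fits into the remaining budget. -/
def greedy (cost : P → ℝ) : ℝ → List P → Finset P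
  | _, [] => ∅
  | budget, p :: rest =>
      if cost p ≤ budget then insert p (greedy cost (budget - cost p) rest)
      else greedy cost budget rest

/-- The priority key of the BasicAV rule: nonincreasing approval score,
ties broken by the tie-breaking order `tb` (smaller `tb` value = preferred). -/
def basicAVkey (A : V → Finset P) (tb : P ↪ ℕ) (p : P) : ℕᵒᵈ ×ₗ ℕ :=
  toLex (OrderDual.toDual (approvers A p).card, tb p)

/-- The BasicAV rule. -/
def basicAV (A : V → Finset P) (tb : P ↪ ℕ) (B : ℝ) (cost : P → ℝ) : Finset P :=
  greedy cost B (prioList (basicAVkey A tb) (lexKey_inj _ tb))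

/-- The priority key of the AV/Cost rule: nonincreasing approval-to-cost ratio
(computed in `ℝ≥0∞`, so that zero-cost projects come first),
ties broken by the tie-breaking order `tb`. -/
def avCostKey (A : V → Finset P) (tb : P ↪ ℕ) (cost : P → ℝ) (p : P) : ENNRealᵒᵈ ×ₗ ℕ :=
  toLex (OrderDual.toDual (((approvers A p).card : ENNReal) / ENNReal.ofReal (cost p)), tb p)

/-- The AV/Cost rule. -/
def avCost (A : V → Finset P) (tb : P ↪ ℕ) (B : ℝ) (cost : P → ℝ) : Finset P :=
  greedy cost B (prioList (avCostKey A tb cost) (lexKey_inj _ tb))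

/-- The element of a nonempty finite set minimizing an injective key. -/
def argminBy {κ : Type} [LinearOrder κ] (key : P → κ) (hk : Function.Injective key)
    (R : Finset P) (hR : R.Nonempty) : P :=
  letI : LinearOrder P := LinearOrder.lift' key hk
  R.min' hR

lemma argminBy_mem {κ : Type} [LinearOrder κ] (key : P → κ) (hk : Function.Injective key)
    (R : Finset P) (hR : R.Nonempty) : argminBy key hk R hR ∈ R := by
  letI : LinearOrder P := LinearOrder.lift' key hk
  exact Finset.min'_mem R hR

/-- The time at which the supporters of `p` (jointly earning one unit of money per
unit of time, currently holding the amounts given by `b`) will have collected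
`cost p` money, measured from the current moment. -/
def phragTau (A : V → Finset P) (cost : P → ℝ) (b : V → ℝ) (p : P) : ℝ :=
  (cost p - ∑ v ∈ approvers A p, b v) / ((approvers A p).card : ℝ)

/-- One pass of the Phragmén rule: repeatedly take the remaining project whose
purchase event comes first (ties broken by `tb`); advance all bank accounts to that
moment; if the project fits in the remaining budget it is bought (and its supporters'
accounts are reset), otherwise it is removed from consideration. -/
def phragmenAux (A : V → Finset P) (tb : P ↪ ℕ) (cost : P → ℝ) :
    Finset P → ℝ → (V → ℝ) → Finset P
  | R, budget, b =>
    if hR : R.Nonempty then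
      let p := argminBy (fun p => toLex ((phragTau A cost b p, tb p) : ℝ × ℕ))
        (lexKey_inj _ tb) R hR
      have hp : p ∈ R := argminBy_mem _ _ _ _
      have hcard : (R.erase p).card < R.card := Finset.card_erase_lt_of_mem hp
      if cost p ≤ budget then
        insert p (phragmenAux A tb cost (R.erase p) (budget - cost p)
          (fun v => if v ∈ approvers A p then 0 else b v + phragTau A cost b p))
      else
        phragmenAux A tb cost (R.erase p) budget (fun v => b v + phragTau A cost b p)
    else ∅
  termination_by R _ _ => R.card

/-- The Phragmén rule. -/
def phragmen (A : V → Finset P) (tb : P ↪ ℕ) (B : ℝ) (cost : P → ℝ) : Finset P :=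
  phragmenAux A tb cost Finset.univ B (fun _ => 0)

/-- The set of coefficients `α` for which project `p` is exactly affordable, where
`contrib bv α c` is the amount a voter currently holding `bv` contributes towards a
project of cost `c` under coefficient `α`. -/
def affordSet (A : V → Finset P) (contrib : ℝ → ℝ → ℝ → ℝ) (cost : P → ℝ)
    (b : V → ℝ) (p : P) : Set ℝ :=
  {α : ℝ | ∑ v ∈ approvers A p, contrib (b v) α (cost p) = cost p}

/-- One pass of the Method of Equal Shares, parametrized by the contribution
function `contrib`: repeatedly select, among the remaining affordable projects, the
one with the smallest affordability coefficient (ties broken by `tb`) and charge its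
supporters accordingly; stop when no remaining project is affordable. -/
def mesAux (A : V → Finset P) (tb : P ↪ ℕ) (contrib : ℝ → ℝ → ℝ → ℝ) (cost : P → ℝ) :
    Finset P → (V → ℝ) → Finset P
  | R, b =>
    let F := R.filter fun p => (affordSet A contrib cost b p).Nonempty
    if hF : F.Nonempty then
      let p := argminBy
        (fun p => toLex ((sInf (affordSet A contrib cost b p), tb p) : ℝ × ℕ))
        (lexKey_inj _ tb) F hF
      have hp : p ∈ R := Finset.mem_of_mem_filter p (argminBy_mem _ _ _ _)
      have hcard : (R.erase p).card < R.card := Finset.card_erase_lt_of_mem hp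
      insert p (mesAux A tb contrib cost (R.erase p)
        (fun v => if v ∈ approvers A p then
            b v - contrib (b v) (sInf (affordSet A contrib cost b p)) (cost p)
          else b v))
    else ∅
  termination_by R _ => R.card

/-- The Method of Equal Shares with cost utilities: a voter holding `bv` contributes
`min bv (α * c)` towards a project of cost `c`. -/
def mesCost (A : V → Finset P) (tb : P ↪ ℕ) (B : ℝ) (cost : P → ℝ) : Finset P :=
  mesAux A tb (fun bv α c => min bv (α * c)) cost Finset.univ
    (fun _ => B / (Fintype.card V : ℝ))

/-- The Method of Equal Shares with approval utilities: a voter holding `bv`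
contributes `min bv α`. -/
def mesApr (A : V → Finset P) (tb : P ↪ ℕ) (B : ℝ) (cost : P → ℝ) : Finset P :=
  mesAux A tb (fun bv α _ => min bv α) cost Finset.univ
    (fun _ => B / (Fintype.card V : ℝ))

/-- The payoff of project `p` in the cost game: `cost p - d p` if `p` is funded,
and `0` otherwise. -/
def payoff (d cost : P → ℝ) (W : Finset P) (p : P) : ℝ :=
  if p ∈ W then cost p - d p else 0

/-- `c` is a (pure) Nash equilibrium of the cost game with delivery costs `d` under
the PB rule `rule`: all reported costs are nonnegative and no project can strictly
increase its payoff by unilaterally reporting a different (nonnegative) cost. -/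
def isNE (rule : (P → ℝ) → Finset P) (d : P → ℝ) (c : P → ℝ) : Prop :=
  (∀ p, 0 ≤ c p) ∧
  ∀ (p : P) (x : ℝ), 0 ≤ x →
    payoff d (Function.update c p x) (rule (Function.update c p x)) p ≤
      payoff d c (rule c) p

/-- `tb` is an approval-to-delivery-cost (A/D) tie-breaking order: projects with zero
delivery cost come first, and among projects with positive delivery costs a strictly
larger approval-to-delivery-cost ratio means a strictly better position. -/
def isADOrder (A : V → Finset P) (d : P → ℝ) (tb : P ↪ ℕ) : Prop :=
  (∀ p q : P, d p = 0 → 0 < d q → tb p < tb q) ∧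
  (∀ p q : P, 0 < d p → 0 < d q →
    ((approvers A q).card : ℝ) / d q < ((approvers A p).card : ℝ) / d p → tb p < tb q)

/-- The approval-proportional strategy profile. -/
def apProfile (A : V → Finset P) (B : ℝ) (p : P) : ℝ :=
  B * (approvers A p).card / (∑ q : P, ((approvers A q).card : ℝ))

/-- Plurality preferences: every voter approves exactly one project. -/
def plurality (A : V → Finset P) : Prop := ∀ v, (A v).card = 1

/-- Party-list preferences: any two ballots are equal or disjoint. -/
def partyList (A : V → Finset P) : Prop := ∀ v w, A v = A w ∨ Disjoint (A v) (A w)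

/-- The party of a project: all projects approved by exactly the same voters. -/
def party (A : V → Finset P) (p : P) : Finset P :=
  Finset.univ.filter fun q => approvers A q = approvers A p

end PB

/-!
Let every project report the whole budget `B`. BasicAV then funds exactly the project `p₀` it
considers first, which earns `B - d p₀ ≥ 0`, the most any report `x ≤ B` can earn. Any other
project, whatever it reports, is considered after `p₀` has exhausted the budget, so it can only
be funded by reporting `0`, which earns `-d p ≤ 0`.
-/

namespace PB

section Greedy

variable {P : Type} [DecidableEq P]

theorem cost_le_of_mem_greedy {cost : P → ℝ} (hc : ∀ q, 0 ≤ cost q) :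
    ∀ {l : List P} {budget : ℝ} {p : P}, p ∈ greedy cost budget l → cost p ≤ budget
  | [], _, _, hp => by simp [greedy] at hp
  | a :: t, budget, p, hp => by
    rw [greedy] at hp
    split_ifs at hp with ha
    · obtain rfl | hp := Finset.mem_insert.mp hp
      · exact ha
      · linarith [cost_le_of_mem_greedy hc hp, hc a]
    · exact cost_le_of_mem_greedy hc hp

theorem greedy_cons_of_le {cost : P → ℝ} {budget : ℝ} {p : P} (l : List P)
    (hp : cost p ≤ budget) :
    greedy cost budget (p :: l) = insert p (greedy cost (budget - cost p) l) := by
  rw [greedy, if_pos hp]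

theorem mem_greedy_cons_of_le {cost : P → ℝ} {budget : ℝ} {p : P} (l : List P)
    (hp : cost p ≤ budget) : p ∈ greedy cost budget (p :: l) := by
  rw [greedy_cons_of_le l hp]
  exact Finset.mem_insert_self _ _

theorem cost_add_le_of_mem_greedy_cons {cost : P → ℝ} (hc : ∀ q, 0 ≤ cost q) {budget : ℝ}
    {p q : P} {l : List P} (hp : cost p ≤ budget) (hq : q ∈ greedy cost budget (p :: l))
    (hqp : q ≠ p) : cost p + cost q ≤ budget := by
  rw [greedy_cons_of_le l hp, Finset.mem_insert, or_iff_right hqp] at hq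
  linarith [cost_le_of_mem_greedy hc hq]

end Greedy

variable {P : Type} [Fintype P] [DecidableEq P]

theorem prioList_pairwise {κ : Type} [LinearOrder κ] (key : P → κ)
    (hk : Function.Injective key) :
    (prioList key hk).Pairwise fun p q => key p ≤ key q := by
  unfold prioList
  exact @Finset.pairwise_sort _ _ _ (_) (_) (_) (_)

theorem prioList_eq_cons_of_forall_le {κ : Type} [LinearOrder κ] (key : P → κ)
    (hk : Function.Injective key) {p₀ : P} (hp₀ : ∀ q, key p₀ ≤ key q) :
    ∃ t, prioList key hk = p₀ :: t := by
  have hmem : p₀ ∈ prioList key hk := by simp [prioList]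
  match prioList key hk, hmem, prioList_pairwise key hk with
  | a :: t, hmem, hsorted =>
    obtain rfl | hmem := List.mem_cons.mp hmem
    · exact ⟨t, rfl⟩
    · rw [hk (((List.pairwise_cons.mp hsorted).1 p₀ hmem).antisymm (hp₀ a))]
      exact ⟨t, rfl⟩

theorem payoff_of_mem {d cost : P → ℝ} {W : Finset P} {p : P} (hp : p ∈ W) :
    payoff d cost W p = cost p - d p :=
  if_pos hp

theorem payoff_of_notMem {d cost : P → ℝ} {W : Finset P} {p : P} (hp : p ∉ W) :
    payoff d cost W p = 0 :=
  if_neg hp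

theorem payoff_le_of_mem_imp {d cost : P → ℝ} {W : Finset P} {p : P} {y : ℝ} (hy : 0 ≤ y)
    (h : p ∈ W → cost p - d p ≤ y) : payoff d cost W p ≤ y := by
  unfold payoff
  split_ifs with hp
  exacts [h hp, hy]

section BasicAV

variable {V : Type} [Fintype V] [DecidableEq V] {A : V → Finset P} {tb : P ↪ ℕ} {B : ℝ}
  {cost : P → ℝ} {p₀ : P}

theorem cost_le_of_mem_basicAV (hc : ∀ q, 0 ≤ cost q) {p : P}
    (hp : p ∈ basicAV A tb B cost) : cost p ≤ B :=
  cost_le_of_mem_greedy hc hp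

theorem mem_basicAV_of_forall_key_le (hp₀ : ∀ q, basicAVkey A tb p₀ ≤ basicAVkey A tb q)
    (hfit : cost p₀ ≤ B) : p₀ ∈ basicAV A tb B cost := by
  obtain ⟨t, ht⟩ := prioList_eq_cons_of_forall_le (basicAVkey A tb) (lexKey_inj _ tb) hp₀
  rw [basicAV, ht]
  exact mem_greedy_cons_of_le t hfit

theorem cost_add_le_of_mem_basicAV (hp₀ : ∀ q, basicAVkey A tb p₀ ≤ basicAVkey A tb q)
    (hc : ∀ q, 0 ≤ cost q) (hfit : cost p₀ ≤ B) {p : P} (hp : p ∈ basicAV A tb B cost)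
    (hpp₀ : p ≠ p₀) : cost p₀ + cost p ≤ B := by
  obtain ⟨t, ht⟩ := prioList_eq_cons_of_forall_le (basicAVkey A tb) (lexKey_inj _ tb) hp₀
  rw [basicAV, ht] at hp
  exact cost_add_le_of_mem_greedy_cons hc hfit hp hpp₀

end BasicAV

end PB

theorem basicAV_NE_exists_top_reports_budget_general
    {P V : Type} [Fintype P] [DecidableEq P] [Fintype V] [DecidableEq V]
    (A : V → Finset P) (tb : P ↪ ℕ) (B : ℝ) (d : P → ℝ)
    (hB : 0 < B)
    (hd0 : ∀ p, 0 ≤ d p) (hdB : ∀ p, d p ≤ B)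
    (p₀ : P) (hp₀ : ∀ q, PB.basicAVkey A tb p₀ ≤ PB.basicAVkey A tb q) :
    ∃ c : P → ℝ, PB.isNE (PB.basicAV A tb B) d c ∧ c p₀ = B := by
  refine ⟨fun _ => B, ⟨fun _ => hB.le, fun p x hx => ?_⟩, rfl⟩
  set c' := Function.update (fun _ => B) p x
  have hc' : ∀ q, 0 ≤ c' q := le_update_iff.2 ⟨hx, fun _ _ => hB.le⟩
  by_cases hpp₀ : p = p₀
  · subst hpp₀
    have hmem : p ∈ PB.basicAV A tb B fun _ => B := PB.mem_basicAV_of_forall_key_le hp₀ le_rfl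
    rw [PB.payoff_of_mem hmem]
    refine PB.payoff_le_of_mem_imp (by linarith [hdB p]) fun hp => ?_
    linarith [PB.cost_le_of_mem_basicAV hc' hp]
  · have hc'p₀ : c' p₀ = B := Function.update_of_ne (Ne.symm hpp₀) x fun _ => B
    have hnot : p ∉ PB.basicAV A tb B fun _ => B := fun hp => by
      linarith [PB.cost_add_le_of_mem_basicAV hp₀ (fun _ => hB.le) le_rfl hp hpp₀]
    rw [PB.payoff_of_notMem hnot]
    refine PB.payoff_le_of_mem_imp le_rfl fun hp => ?_
    have := PB.cost_add_le_of_mem_basicAV hp₀ hc' hc'p₀.le hp hpp₀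
    linarith [hd0 p]

/-- For every PB game and every tie-breaking order there is a
BasicAV-Nash equilibrium in which the project considered first by BasicAV
(largest approval score, ties broken by the tie-breaking order, i.e., the project
with the minimal BasicAV priority key) reports cost `B`. -/
theorem basicAV_NE_exists_top_reports_budget
    {P V : Type} [Fintype P] [DecidableEq P] [Fintype V] [DecidableEq V]
    (A : V → Finset P) (tb : P ↪ ℕ) (B : ℝ) (d : P → ℝ)
    (hB : 0 < B) (hballots : ∀ v, (A v).Nonempty)
    (happr : ∀ p, (PB.approvers A p).Nonempty)
    (hd0 : ∀ p, 0 ≤ d p) (hdB : ∀ p, d p ≤ B)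
    (p₀ : P) (hp₀ : ∀ q, PB.basicAVkey A tb p₀ ≤ PB.basicAVkey A tb q) :
    ∃ c : P → ℝ, PB.isNE (PB.basicAV A tb B) d c ∧ c p₀ = B :=
  basicAV_NE_exists_top_reports_budget_general A tb B d hB hd0 hdB p₀ hp₀
end
end

section
/- For every PB instance with plurality ballots and any fixed tie-breaking order ≻, the AV/Cost rule and the Phragmén rule output the same set of funded projects. -/
open scoped Classical

set_option linter.unusedSectionVars false
set_option linter.unusedVariables false

noncomputable section

/-!
Under plurality ballots the supporter groups of distinct projects are disjoint, so buying a
project resets only the accounts of its own supporters, none of whom supports a project still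
in play. Hence at every moment all supporters of the remaining projects hold one common
amount `t`, and the next purchase event is that of the remaining project minimizing
`cost p / |A(p)| - t`, i.e. minimizing the cost per approver, with ties broken by `tb`. Phragmén
is therefore the greedy procedure along the same priority order as AV/Cost.
-/

namespace PB

variable {P V : Type} [Fintype P] [DecidableEq P] [Fintype V] [DecidableEq V]

lemma toLex_le_toLex_iff_of_strictMonoOn {α β γ : Type} [LinearOrder α] [Preorder β] [LE γ]
    {f : α → β} {s : Set α} (hf : StrictMonoOn f s) {a b : α} (ha : a ∈ s) (hb : b ∈ s)
    (m n : γ) : toLex (f a, m) ≤ toLex (f b, n) ↔ toLex (a, m) ≤ toLex (b, n) := by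
  simp only [Prod.Lex.toLex_le_toLex, hf.lt_iff_lt ha hb, hf.eq_iff_eq ha hb]

section Greedy

variable {κ : Type} [LinearOrder κ]

lemma argminBy_le (key : P → κ) (hk : Function.Injective key) (R : Finset P)
    (hR : R.Nonempty) {y : P} (hy : y ∈ R) : key (argminBy key hk R hR) ≤ key y := by
  let : LinearOrder P := LinearOrder.lift' key hk
  exact Finset.min'_le R y hy

lemma argminBy_eq_of_forall_le (key : P → κ) (hk : Function.Injective key) (R : Finset P)
    (hR : R.Nonempty) {x : P} (hx : x ∈ R) (hmin : ∀ y ∈ R, key x ≤ key y) :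
    argminBy key hk R hR = x :=
  hk (le_antisymm (argminBy_le key hk R hR hx) (hmin _ (argminBy_mem key hk R hR)))

lemma argminBy_congr {κ' : Type} [LinearOrder κ'] {k₁ : P → κ} {k₂ : P → κ'}
    (h₁ : Function.Injective k₁) (h₂ : Function.Injective k₂) {R : Finset P}
    (hR : R.Nonempty) (hagree : ∀ p ∈ R, ∀ q ∈ R, k₁ p ≤ k₁ q ↔ k₂ p ≤ k₂ q) :
    argminBy k₁ h₁ R hR = argminBy k₂ h₂ R hR := by
  have hmem := argminBy_mem k₂ h₂ R hR
  exact argminBy_eq_of_forall_le k₁ h₁ R hR hmem fun y hy =>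
    (hagree _ hmem _ hy).mpr (argminBy_le k₂ h₂ R hR hy)

def greedyBy (cost : P → ℝ) (key : P → κ) (hk : Function.Injective key) :
    Finset P → ℝ → Finset P
  | R, budget =>
    if hR : R.Nonempty then
      let p := argminBy key hk R hR
      have : (R.erase p).card < R.card := Finset.card_erase_lt_of_mem (argminBy_mem _ _ _ _)
      if cost p ≤ budget then insert p (greedyBy cost key hk (R.erase p) (budget - cost p))
      else greedyBy cost key hk (R.erase p) budget
    else ∅
  termination_by R _ => R.card

lemma greedyBy_congr {κ' : Type} [LinearOrder κ'] (cost : P → ℝ) {k₁ : P → κ} {k₂ : P → κ'}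
    (h₁ : Function.Injective k₁) (h₂ : Function.Injective k₂)
    (hagree : ∀ p q, k₁ p ≤ k₁ q ↔ k₂ p ≤ k₂ q) (R : Finset P) (budget : ℝ) :
    greedyBy cost k₁ h₁ R budget = greedyBy cost k₂ h₂ R budget := by
  induction R using Finset.strongInduction generalizing budget with
  | _ R ih =>
    rw [greedyBy, greedyBy]
    by_cases hR : R.Nonempty
    · have hp := argminBy_congr h₁ h₂ hR fun p _ q _ => hagree p q
      have hlt := Finset.erase_ssubset (argminBy_mem k₁ h₁ R hR)
      simp only [dif_pos hR, ← hp, ih _ hlt]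
    · simp only [dif_neg hR]

lemma greedy_eq_greedyBy (cost : P → ℝ) (key : P → κ) (hk : Function.Injective key)
    {l : List P} (hnd : l.Nodup) (hl : l.Pairwise fun p q => key p ≤ key q) (budget : ℝ) :
    greedy cost budget l = greedyBy cost key hk l.toFinset budget := by
  induction l generalizing budget with
  | nil => simp [greedy, greedyBy]
  | cons p rest ih =>
    obtain ⟨hp_le, hl_rest⟩ := List.pairwise_cons.mp hl
    obtain ⟨hp_notMem, hnd_rest⟩ := List.nodup_cons.mp hnd
    have hpmem : p ∈ (p :: rest).toFinset := by simp
    have hne : (p :: rest).toFinset.Nonempty := ⟨p, hpmem⟩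
    have hargmin : argminBy key hk (p :: rest).toFinset hne = p := by
      refine argminBy_eq_of_forall_le key hk _ hne hpmem fun y hy => ?_
      rcases List.mem_cons.mp (List.mem_toFinset.mp hy) with rfl | hy
      exacts [le_rfl, hp_le y hy]
    have herase : (p :: rest).toFinset.erase p = rest.toFinset := by
      rw [List.toFinset_cons, Finset.erase_insert (by simpa using hp_notMem)]
    rw [greedy, greedyBy, dif_pos hne]
    simp only [hargmin, herase, ih hnd_rest hl_rest]

lemma greedy_prioList (cost : P → ℝ) (key : P → κ) (hk : Function.Injective key)
    (budget : ℝ) :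
    greedy cost budget (prioList key hk) = greedyBy cost key hk Finset.univ budget := by
  let : DecidableRel fun p q : P => key p ≤ key q :=
    fun a b => inferInstanceAs (Decidable (key a ≤ key b))
  let : IsTrans P fun p q => key p ≤ key q := ⟨fun _ _ _ h1 h2 => le_trans h1 h2⟩
  let : Std.Antisymm fun p q : P => key p ≤ key q := ⟨fun _ _ h1 h2 => hk (le_antisymm h1 h2)⟩
  let : Std.Total fun p q : P => key p ≤ key q := ⟨fun _ _ => le_total _ _⟩
  rw [prioList, greedy_eq_greedyBy cost key hk (Finset.sort_nodup _ _)
    (Finset.pairwise_sort _ _), Finset.sort_toFinset]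

end Greedy

variable (A : V → Finset P) (tb : P ↪ ℕ) (cost : P → ℝ)

def costPerApproverKey (p : P) : ℝ ×ₗ ℕ :=
  toLex (cost p / ((approvers A p).card : ℝ), tb p)

lemma costPerApproverKey_injective : Function.Injective (costPerApproverKey A tb cost) :=
  lexKey_inj _ tb

lemma approval_div_cost_eq_inv {p : P} (happr : (approvers A p).Nonempty) :
    ((approvers A p).card : ENNReal) / ENNReal.ofReal (cost p) =
      (ENNReal.ofReal (cost p / ((approvers A p).card : ℝ)))⁻¹ := by
  have hn : (0 : ℝ) < (approvers A p).card := by exact_mod_cast happr.card_pos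
  rw [ENNReal.ofReal_div_of_pos hn, ENNReal.ofReal_natCast,
    ENNReal.inv_div (Or.inl (by simp)) (Or.inl (by exact_mod_cast hn.ne'))]

lemma avCostKey_le_iff (hcost : ∀ p, 0 ≤ cost p) (happr : ∀ p, (approvers A p).Nonempty)
    (p q : P) :
    avCostKey A tb cost p ≤ avCostKey A tb cost q ↔
      costPerApproverKey A tb cost p ≤ costPerApproverKey A tb cost q := by
  have hmono : StrictMonoOn (fun x : ℝ => OrderDual.toDual (ENNReal.ofReal x)⁻¹) (Set.Ici 0) :=
    fun x hx _ _ hxy => by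
      rw [OrderDual.toDual_lt_toDual, ENNReal.inv_lt_inv]
      exact (ENNReal.ofReal_lt_ofReal_iff (lt_of_le_of_lt hx hxy)).mpr hxy
  rw [avCostKey, avCostKey, approval_div_cost_eq_inv A cost (happr p),
    approval_div_cost_eq_inv A cost (happr q)]
  exact toLex_le_toLex_iff_of_strictMonoOn hmono (div_nonneg (hcost p) (Nat.cast_nonneg _))
    (div_nonneg (hcost q) (Nat.cast_nonneg _)) _ _

lemma approvers_disjoint_of_plurality (hplu : plurality A) {p q : P} (hpq : p ≠ q) :
    Disjoint (approvers A p) (approvers A q) := by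
  refine Finset.disjoint_left.mpr fun v hp hq => hpq ?_
  obtain ⟨a, ha⟩ := Finset.card_eq_one.mp (hplu v)
  simp only [approvers, Finset.mem_filter, Finset.mem_univ, true_and, ha,
    Finset.mem_singleton] at hp hq
  exact hp.trans hq.symm

lemma phragTau_of_forall_eq {b : V → ℝ} {t : ℝ} {p : P} (happr : (approvers A p).Nonempty)
    (hb : ∀ v ∈ approvers A p, b v = t) :
    phragTau A cost b p = cost p / ((approvers A p).card : ℝ) - t := by
  have hn : ((approvers A p).card : ℝ) ≠ 0 := by exact_mod_cast happr.card_pos.ne'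
  rw [phragTau, Finset.sum_congr rfl hb, Finset.sum_const, nsmul_eq_mul]
  field_simp

lemma argminBy_phragTau_eq {R : Finset P} (hR : R.Nonempty) {b : V → ℝ} {t : ℝ}
    (happr : ∀ p, (approvers A p).Nonempty) (hb : ∀ q ∈ R, ∀ v ∈ approvers A q, b v = t) :
    argminBy (fun p => toLex ((phragTau A cost b p, tb p) : ℝ × ℕ)) (lexKey_inj _ tb) R hR =
      argminBy (costPerApproverKey A tb cost) (costPerApproverKey_injective A tb cost) R hR := by
  refine argminBy_congr _ _ hR fun p hp q hq => ?_
  rw [phragTau_of_forall_eq A cost (happr p) (hb p hp),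
    phragTau_of_forall_eq A cost (happr q) (hb q hq)]
  exact toLex_le_toLex_iff_of_strictMonoOn (s := Set.univ)
    (fun _ _ _ _ h => sub_lt_sub_right h t) (Set.mem_univ _) (Set.mem_univ _) _ _

lemma phragmenAux_eq_greedyBy (hplu : plurality A) (happr : ∀ p, (approvers A p).Nonempty)
    (R : Finset P) (budget t : ℝ) (b : V → ℝ) (hb : ∀ q ∈ R, ∀ v ∈ approvers A q, b v = t) :
    phragmenAux A tb cost R budget b =
      greedyBy cost (costPerApproverKey A tb cost) (costPerApproverKey_injective A tb cost)
        R budget := by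
  induction R using Finset.strongInduction generalizing budget t b with
  | _ R ih =>
    rw [phragmenAux, greedyBy]
    by_cases hR : R.Nonempty
    · simp only [dif_pos hR, argminBy_phragTau_eq A tb cost hR happr hb]
      set q := argminBy (costPerApproverKey A tb cost) (costPerApproverKey_injective A tb cost)
        R hR
      have hq : q ∈ R := argminBy_mem _ _ _ _
      have hlt := Finset.erase_ssubset hq
      have hb_erase : ∀ r ∈ R.erase q, ∀ v ∈ approvers A r, b v = t :=
        fun r hr => hb r (Finset.mem_of_mem_erase hr)
      have hnot_q : ∀ r ∈ R.erase q, ∀ v ∈ approvers A r, v ∉ approvers A q :=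
        fun r hr v hv => Finset.disjoint_left.mp
          (approvers_disjoint_of_plurality A hplu (Finset.ne_of_mem_erase hr)) hv
      split_ifs
      · congr 1
        refine ih _ hlt _ (t + phragTau A cost b q) _ fun r hr v hv => ?_
        rw [if_neg (hnot_q r hr v hv), hb_erase r hr v hv]
      · refine ih _ hlt _ (t + phragTau A cost b q) _ fun r hr v hv => ?_
        rw [hb_erase r hr v hv]
    · simp only [dif_neg hR]

end PB

theorem avCost_eq_phragmen_on_plurality_general
    {P V : Type} [Fintype P] [DecidableEq P] [Fintype V] [DecidableEq V]
    (A : V → Finset P) (tb : P ↪ ℕ) (B : ℝ) (cost : P → ℝ)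
    (hcost : ∀ p, 0 ≤ cost p)
    (hplu : PB.plurality A) (happr : ∀ p, (PB.approvers A p).Nonempty) :
    PB.avCost A tb B cost = PB.phragmen A tb B cost := by
  have hinj : Function.Injective (PB.avCostKey A tb cost) := PB.lexKey_inj _ tb
  calc PB.avCost A tb B cost = PB.greedyBy cost _ hinj Finset.univ B :=
        PB.greedy_prioList cost _ hinj B
    _ = PB.greedyBy cost _ (PB.costPerApproverKey_injective A tb cost) Finset.univ B :=
        PB.greedyBy_congr cost _ _ (PB.avCostKey_le_iff A tb cost hcost happr) _ _
    _ = PB.phragmen A tb B cost :=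
        (PB.phragmenAux_eq_greedyBy A tb cost hplu happr _ B 0 _ fun _ _ _ _ => rfl).symm

/-- For plurality ballots, AV/Cost and Phragmén output the same set of
funded projects (for any fixed tie-breaking order). -/
theorem avCost_eq_phragmen_on_plurality
    {P V : Type} [Fintype P] [DecidableEq P] [Fintype V] [DecidableEq V]
    (A : V → Finset P) (tb : P ↪ ℕ) (B : ℝ) (cost : P → ℝ)
    (hB : 0 < B) (hcost : ∀ p, 0 ≤ cost p)
    (hplu : PB.plurality A) (happr : ∀ p, (PB.approvers A p).Nonempty) :
    PB.avCost A tb B cost = PB.phragmen A tb B cost :=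
  avCost_eq_phragmen_on_plurality_general A tb B cost hcost hplu happr
end
end

section
/- For every PB game (P,V,B,d) with plurality ballots and every tie-breaking order, there exists a MES-Apr-Nash equilibrium; in particular, the strategy profile in which each project p_i reports max(d(p_i), B·|A(p_i)|/|V|) is a MES-Apr-Nash equilibrium. -/
open scoped Classical

set_option linter.unusedSectionVars false
set_option linter.unusedVariables false

noncomputable section

/-! Under plurality ballots the supporters of distinct projects are disjoint, so MES-Apr pays for
each project only with the money of its own supporters, who still hold `B / |V|` each when it is
considered. Hence MES-Apr funds `p` exactly when `cost p ≤ B·|A(p)|/|V|`, whatever the other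
projects report, and against a fixed threshold reporting `max (d p) threshold` is a best
response. -/

namespace PB

section

variable {P V : Type} [Fintype P] [DecidableEq P] [Fintype V] [DecidableEq V]
  {A : V → Finset P}

lemma mem_approvers {p : P} {v : V} : v ∈ approvers A p ↔ p ∈ A v := by
  simp [approvers]

lemma plurality.notMem_approvers (hplu : plurality A) {p q : P} {v : V} (hpq : p ≠ q)
    (hp : v ∈ approvers A p) : v ∉ approvers A q := by
  intro hq
  obtain ⟨a, ha⟩ := Finset.card_eq_one.mp (hplu v)
  rw [mem_approvers, ha, Finset.mem_singleton] at hp hq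
  exact hpq (hp.trans hq.symm)

lemma affordSet_min_nonempty_iff {cost : P → ℝ} {b : V → ℝ} {m : ℝ} {p : P}
    (hp : (approvers A p).Nonempty) (hb : ∀ v ∈ approvers A p, b v = m) :
    (affordSet A (fun bv α _ => min bv α) cost b p).Nonempty ↔
      cost p ≤ (approvers A p).card * m := by
  set n : ℝ := ((approvers A p).card : ℝ)
  have hn : 0 < n := Nat.cast_pos.mpr hp.card_pos
  have hsum (α : ℝ) : ∑ v ∈ approvers A p, min (b v) α = n * min m α := by
    rw [Finset.sum_congr rfl fun v hv => by rw [hb v hv], Finset.sum_const, nsmul_eq_mul]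
  simp only [affordSet, Set.Nonempty, Set.mem_ofPred_eq, hsum]
  constructor
  · rintro ⟨α, hα⟩
    exact hα ▸ mul_le_mul_of_nonneg_left (min_le_left m α) hn.le
  · intro h
    refine ⟨cost p / n, ?_⟩
    rw [min_eq_right ((div_le_iff₀' hn).mpr h), mul_div_cancel₀ _ hn.ne']

lemma mem_mesAux_min_iff_of_plurality (hplu : plurality A) (happr : ∀ p, (approvers A p).Nonempty)
    (tb : P ↪ ℕ) (cost : P → ℝ) (m : ℝ) (R : Finset P) (b : V → ℝ)
    (hb : ∀ r ∈ R, ∀ v ∈ approvers A r, b v = m) (p : P) :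
    p ∈ mesAux A tb (fun bv α _ => min bv α) cost R b ↔
      p ∈ R ∧ cost p ≤ (approvers A p).card * m := by
  induction R using Finset.strongInduction generalizing b with
  | _ R ih =>
    have hF : R.filter (fun q => (affordSet A (fun bv α _ => min bv α) cost b q).Nonempty) =
        R.filter fun q => cost q ≤ (approvers A q).card * m :=
      Finset.filter_congr fun q hq => affordSet_min_nonempty_iff (happr q) (hb q hq)
    rw [mesAux]
    split_ifs with hne
    · dsimp only
      generalize hq_def : argminBy (κ := ℝ ×ₗ ℕ) _ _ _ hne = q
      have hq : q ∈ R.filter fun q => cost q ≤ (approvers A q).card * m :=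
        hq_def ▸ hF ▸ argminBy_mem _ _ _ hne
      rw [Finset.mem_filter] at hq
      rw [Finset.mem_insert, ih _ (Finset.erase_ssubset hq.1)]
      · by_cases hpq : p = q
        · simp [hpq, hq]
        · simp [hpq]
      · intro r hr v hv
        rw [if_neg (hplu.notMem_approvers (Finset.ne_of_mem_erase hr) hv)]
        exact hb r (Finset.mem_of_mem_erase hr) v hv
    · rw [hF] at hne
      simpa using fun hp hc => hne ⟨p, Finset.mem_filter.mpr ⟨hp, hc⟩⟩

lemma mem_mesApr_iff_of_plurality (hplu : plurality A) (happr : ∀ p, (approvers A p).Nonempty)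
    (tb : P ↪ ℕ) (B : ℝ) (cost : P → ℝ) (p : P) :
    p ∈ mesApr A tb B cost ↔ cost p ≤ B * (approvers A p).card / Fintype.card V := by
  rw [mesApr, mem_mesAux_min_iff_of_plurality hplu happr tb cost _ _ _ fun _ _ _ _ => rfl,
    mul_div_assoc', mul_comm]
  simp only [Finset.mem_univ, true_and]

end

-- Raising the report above the threshold loses the project; lowering it only lowers the profit.
lemma isNE_max_of_mem_iff {P : Type} [DecidableEq P] {rule : (P → ℝ) → Finset P}
    {d t : P → ℝ} (hd0 : ∀ p, 0 ≤ d p) (hrule : ∀ c p, p ∈ rule c ↔ c p ≤ t p) :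
    isNE rule d fun p => max (d p) (t p) := by
  refine ⟨fun p => le_max_of_le_left (hd0 p), fun p x _ => ?_⟩
  simp only [payoff, hrule, Function.update_self, max_le_iff, le_refl, and_true]
  split_ifs with hx hd hd
  · rw [max_eq_right hd]; linarith
  · linarith [not_le.mp hd]
  · exact sub_nonneg.mpr (le_max_left _ _)
  · rfl

end PB

theorem mesApr_NE_plurality_general
    {P V : Type} [Fintype P] [DecidableEq P] [Fintype V] [DecidableEq V]
    (A : V → Finset P) (tb : P ↪ ℕ) (B : ℝ) (d : P → ℝ)
    (hplu : PB.plurality A)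
    (happr : ∀ p, (PB.approvers A p).Nonempty)
    (hd0 : ∀ p, 0 ≤ d p) :
    (∃ c : P → ℝ, PB.isNE (PB.mesApr A tb B) d c) ∧
    PB.isNE (PB.mesApr A tb B) d
      (fun p => max (d p) (B * ((PB.approvers A p).card : ℝ) / (Fintype.card V : ℝ))) := by
  have hNE := PB.isNE_max_of_mem_iff hd0 (PB.mem_mesApr_iff_of_plurality hplu happr tb B)
  exact ⟨⟨_, hNE⟩, hNE⟩

/-- For plurality ballots, a MES-Apr-Nash equilibrium always exists;
in particular, the profile in which each project `p` reports
`max (d p) (B·|A(p)|/|V|)` is a MES-Apr-Nash equilibrium. -/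
theorem mesApr_NE_plurality
    {P V : Type} [Fintype P] [DecidableEq P] [Fintype V] [DecidableEq V] [Nonempty V]
    (A : V → Finset P) (tb : P ↪ ℕ) (B : ℝ) (d : P → ℝ)
    (hB : 0 < B) (hplu : PB.plurality A)
    (happr : ∀ p, (PB.approvers A p).Nonempty)
    (hd0 : ∀ p, 0 ≤ d p) (hdB : ∀ p, d p ≤ B) :
    (∃ c : P → ℝ, PB.isNE (PB.mesApr A tb B) d c) ∧
    PB.isNE (PB.mesApr A tb B) d
      (fun p => max (d p) (B * ((PB.approvers A p).card : ℝ) / (Fintype.card V : ℝ))) :=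
  mesApr_NE_plurality_general A tb B d hplu happr hd0
end
end

section
/- Let B > 0 and consider the PB game with four projects p_1, p_2, p_3, p_4, sixteen voters v_1, …, v_16 with approvals A(p_1) = {v_1,…,v_5}, A(p_2) = {v_13,v_14,v_15,v_16,v_1}, A(p_3) = {v_5,…,v_9}, A(p_4) = {v_9,…,v_13}, budget B, and zero delivery costs. For every tie-breaking order on the projects this game has no MES-Apr-Nash equilibrium. -/
open scoped Classical

set_option linter.unusedSectionVars false
set_option linter.unusedVariables false

noncomputable section

/-- The approval profile of the four-project, sixteen-voter example: projects
`0,1,2,3` are `p₁,p₂,p₃,p₄` and voter `i : Fin 16` is `v_{i+1}`;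
`A(p₁) = {v₁,…,v₅}`, `A(p₂) = {v₁₃,…,v₁₆,v₁}`, `A(p₃) = {v₅,…,v₉}`,
`A(p₄) = {v₉,…,v₁₃}`. -/
def exA19 : Fin 16 → Finset (Fin 4) := fun v =>
  if v = 0 then {0, 1}
  else if v.val ≤ 3 then {0}
  else if v = 4 then {0, 2}
  else if v.val ≤ 7 then {2}
  else if v = 8 then {2, 3}
  else if v.val ≤ 11 then {3}
  else if v = 12 then {3, 1}
  else {1}


/-!
The four projects form the cycle `p₁ – p₃ – p₄ – p₂ – p₁`: neighbours share exactly one voter,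
every project has three voters of its own, and every voter starts with `β = B / 16`.

In an equilibrium `c` every project is funded at a cost of at least `3β`, since its own three
voters can always pay `3β`. Let `q₁, q₂, q₃, q₄` be the order in which MES-Apr buys the projects
under `c`. This order bounds the costs from above, through the affordability coefficients. A
project also bounds its own cost from below: if it drops out, the others are bought in some
order, and it could have asked for all the money its voters keep afterwards.

If `q₁` and `q₂` are opposite on the cycle, then `q₃` and `q₄` both cost
`5β - (c q₁ + c q₂) / 5`, the second round forces `c q₂ = 4β`, and `c q₁ ≤ c q₃` contradicts
the lower bound for `q₁` obtained by letting `q₃` and `q₄` be bought first. If `q₁` and `q₂`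
are neighbours, the last two projects both have coefficient `4β/5` in the third round. Then the
other neighbour `Z` of `q₂` costs `21β/5 - α₂`, where `α₂ ≤ 4β/5` is the coefficient of `q₂`,
and this contradicts the lower bound for `q₂` obtained by letting `Z` be bought before it.
-/

/-! ### The Method of Equal Shares with approval utilities -/

namespace MesApr

open PB Finset

variable {P V : Type} [Fintype P] [DecidableEq P] [Fintype V] [DecidableEq V]

def Affordable (A : V → Finset P) (cost : P → ℝ) (b : V → ℝ) (p : P) : Prop :=
  (affordSet A (fun bv α _ => min bv α) cost b p).Nonempty

/-- The affordability coefficient `α_p`; it is `0` when `p` is not affordable. -/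
def coef (A : V → Finset P) (cost : P → ℝ) (b : V → ℝ) (p : P) : ℝ :=
  sInf (affordSet A (fun bv α _ => min bv α) cost b p)

def key (A : V → Finset P) (tb : P ↪ ℕ) (cost : P → ℝ) (b : V → ℝ) (p : P) : ℝ ×ₗ ℕ :=
  toLex (coef A cost b p, tb p)

def pay (A : V → Finset P) (cost : P → ℝ) (b : V → ℝ) (q : P) : V → ℝ :=
  fun v => if v ∈ approvers A q then b v - min (b v) (coef A cost b q) else b v

def run (A : V → Finset P) (tb : P ↪ ℕ) (cost : P → ℝ) (R : Finset P) (b : V → ℝ) :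
    Finset P :=
  mesAux A tb (fun bv α _ => min bv α) cost R b

def IsSelected (A : V → Finset P) (tb : P ↪ ℕ) (cost : P → ℝ) (R : Finset P) (b : V → ℝ)
    (q : P) : Prop :=
  q ∈ R ∧ Affordable A cost b q ∧
    ∀ r ∈ R, r ≠ q → Affordable A cost b r → key A tb cost b q ≤ key A tb cost b r

variable {A : V → Finset P} {tb : P ↪ ℕ} {cost cost' : P → ℝ} {b b' : V → ℝ}
  {R : Finset P} {p q r : P} {α α₀ : ℝ}

section Coefficient

lemma mem_affordSet :
    α ∈ affordSet A (fun bv α _ => min bv α) cost b p ↔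
      ∑ v ∈ approvers A p, min (b v) α = cost p :=
  Iff.rfl

lemma Affordable.cost_le_sum (h : Affordable A cost b p) :
    cost p ≤ ∑ v ∈ approvers A p, b v := by
  obtain ⟨α, hα⟩ := h
  rw [← mem_affordSet.1 hα]
  exact sum_le_sum fun v _ => min_le_left _ _

lemma affordable_of_cost_le_sum (hc : 0 ≤ cost p) (hb : ∀ v, 0 ≤ b v)
    (h : cost p ≤ ∑ v ∈ approvers A p, b v) : Affordable A cost b p := by
  have hcont : Continuous fun α : ℝ => ∑ v ∈ approvers A p, min (b v) α := by fun_prop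
  have h0 : ∑ v ∈ approvers A p, min (b v) 0 = 0 :=
    sum_eq_zero fun v _ => min_eq_right (hb v)
  have hM : ∑ v ∈ approvers A p, min (b v) (∑ w ∈ approvers A p, b w) =
      ∑ v ∈ approvers A p, b v :=
    sum_congr rfl fun v hv => min_eq_left (single_le_sum (fun w _ => hb w) hv)
  obtain ⟨α, -, hα⟩ := intermediate_value_Icc (sum_nonneg fun v _ => hb v) hcont.continuousOn
    (show cost p ∈ Set.Icc _ _ by rw [h0, hM]; exact ⟨hc, h⟩)
  exact ⟨α, hα⟩

lemma cost_le_card_mul_of_mem (hα : α ∈ affordSet A (fun bv α _ => min bv α) cost b p) :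
    cost p ≤ (approvers A p).card * α := by
  rw [← mem_affordSet.1 hα]
  calc ∑ v ∈ approvers A p, min (b v) α ≤ ∑ _v ∈ approvers A p, α :=
        sum_le_sum fun v _ => min_le_right _ _
    _ = _ := by rw [sum_const, nsmul_eq_mul]

lemma bddBelow_affordSet (hne : (approvers A p).Nonempty) :
    BddBelow (affordSet A (fun bv α _ => min bv α) cost b p) := by
  have hn : (0 : ℝ) < (approvers A p).card := by exact_mod_cast hne.card_pos
  refine ⟨cost p / (approvers A p).card, fun α hα => ?_⟩
  rw [div_le_iff₀ hn, mul_comm]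
  exact cost_le_card_mul_of_mem hα

lemma Affordable.coef_mem (h : Affordable A cost b p) (hne : (approvers A p).Nonempty) :
    coef A cost b p ∈ affordSet A (fun bv α _ => min bv α) cost b p := by
  have hclosed : IsClosed (affordSet A (fun bv α _ => min bv α) cost b p) :=
    isClosed_eq (by fun_prop) continuous_const
  exact hclosed.csInf_mem h (bddBelow_affordSet hne)

lemma Affordable.sum_min_coef (h : Affordable A cost b p) (hne : (approvers A p).Nonempty) :
    ∑ v ∈ approvers A p, min (b v) (coef A cost b p) = cost p :=
  h.coef_mem hne

lemma Affordable.cost_le_card_mul_coef (h : Affordable A cost b p)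
    (hne : (approvers A p).Nonempty) : cost p ≤ (approvers A p).card * coef A cost b p :=
  cost_le_card_mul_of_mem (h.coef_mem hne)

lemma coef_nonneg (hne : (approvers A p).Nonempty) (hc : 0 ≤ cost p) :
    0 ≤ coef A cost b p := by
  by_cases h : Affordable A cost b p
  · have hn : (0 : ℝ) < (approvers A p).card := by exact_mod_cast hne.card_pos
    nlinarith [h.cost_le_card_mul_coef hne]
  · rw [coef, Set.not_nonempty_iff_eq_empty.1 h, Real.sInf_empty]

lemma Affordable.coef_le (h : Affordable A cost b p) (hne : (approvers A p).Nonempty) {M : ℝ}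
    (hM : ∀ v ∈ approvers A p, b v ≤ M) : coef A cost b p ≤ M := by
  by_contra! hlt
  have hMmem : M ∈ affordSet A (fun bv α _ => min bv α) cost b p := by
    rw [mem_affordSet, ← h.sum_min_coef hne]
    exact sum_congr rfl fun v hv =>
      (min_eq_left (hM v hv)).trans (min_eq_left ((hM v hv).trans hlt.le)).symm
  exact hlt.not_ge (csInf_le (bddBelow_affordSet hne) hMmem)

lemma coef_eq_of_sum_eq (hsum : ∑ v ∈ approvers A p, min (b v) α₀ = cost p)
    (hwit : ∃ v ∈ approvers A p, α₀ ≤ b v) : coef A cost b p = α₀ := by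
  obtain ⟨w, hw, hwb⟩ := hwit
  refine IsLeast.csInf_eq ⟨hsum, fun α hα => ?_⟩
  by_contra! hlt
  have : ∑ v ∈ approvers A p, min (b v) α < ∑ v ∈ approvers A p, min (b v) α₀ :=
    sum_lt_sum (fun v _ => min_le_min le_rfl hlt.le)
      ⟨w, hw, (min_le_right _ _).trans_lt (hlt.trans_eq (min_eq_right hwb).symm)⟩
  rw [mem_affordSet.1 hα, hsum] at this
  exact this.false

lemma affordSet_congr (hc : cost p = cost' p) (hb : ∀ v ∈ approvers A p, b v = b' v) :
    affordSet A (fun bv α _ => min bv α) cost b p =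
      affordSet A (fun bv α _ => min bv α) cost' b' p := by
  ext α
  simp only [mem_affordSet, hc, sum_congr rfl fun v hv => congrArg (min · α) (hb v hv)]

lemma coef_congr (hc : cost p = cost' p) (hb : ∀ v ∈ approvers A p, b v = b' v) :
    coef A cost b p = coef A cost' b' p := by
  rw [coef, coef, affordSet_congr hc hb]

lemma affordable_congr (hc : cost p = cost' p) (hb : ∀ v ∈ approvers A p, b v = b' v) :
    Affordable A cost b p ↔ Affordable A cost' b' p := by
  rw [Affordable, Affordable, affordSet_congr hc hb]

end Coefficient

section Selection

lemma key_le_of_coef_lt (h : coef A cost b q < coef A cost' b' r) :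
    key A tb cost b q ≤ key A tb cost' b' r :=
  (Prod.Lex.toLex_lt_toLex.2 (Or.inl h)).le

lemma key_le_of_coef_eq (h : coef A cost b q = coef A cost' b' r) (htb : tb q ≤ tb r) :
    key A tb cost b q ≤ key A tb cost' b' r :=
  Prod.Lex.toLex_le_toLex.2 (Or.inr ⟨h, htb⟩)

lemma coef_le_of_key_le (h : key A tb cost b q ≤ key A tb cost' b' r) :
    coef A cost b q ≤ coef A cost' b' r := by
  rcases Prod.Lex.toLex_le_toLex.1 h with h | ⟨h, -⟩
  exacts [h.le, h.le]

lemma tb_le_of_key_le (h : key A tb cost b q ≤ key A tb cost' b' r)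
    (he : coef A cost b q = coef A cost' b' r) : tb q ≤ tb r := by
  rcases Prod.Lex.toLex_le_toLex.1 h with h | ⟨-, h⟩
  exacts [absurd he h.ne, h]

lemma IsSelected.unique (hq : IsSelected A tb cost R b q) (hr : IsSelected A tb cost R b r) :
    q = r := by
  by_contra hne
  exact hne (lexKey_inj _ tb (le_antisymm (hq.2.2 r hr.1 (Ne.symm hne) hr.2.1)
    (hr.2.2 q hq.1 hne hq.2.1)))

lemma IsSelected.erase (h : IsSelected A tb cost R b q) (hqp : q ≠ p) :
    IsSelected A tb cost (R.erase p) b q :=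
  ⟨mem_erase.2 ⟨hqp, h.1⟩, h.2.1, fun r hr => h.2.2 r (mem_of_mem_erase hr)⟩

lemma isSelected_of_coef_lt (hq : q ∈ R) (ha : Affordable A cost b q)
    (h : ∀ r ∈ R, r ≠ q → Affordable A cost b r → coef A cost b q < coef A cost b r) :
    IsSelected A tb cost R b q :=
  ⟨hq, ha, fun r hr hrq hra => key_le_of_coef_lt (h r hr hrq hra)⟩

lemma isSelected_congr (hc : ∀ r ∈ R, cost r = cost' r) :
    IsSelected A tb cost R b q ↔ IsSelected A tb cost' R b q := by
  refine ⟨fun h => ?_, fun h => ?_⟩ <;> refine ⟨h.1, ?_, fun r hr hrq hra => ?_⟩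
  · exact (affordable_congr (hc q h.1) fun _ _ => rfl).1 h.2.1
  · have := h.2.2 r hr hrq ((affordable_congr (hc r hr) fun _ _ => rfl).2 hra)
    rwa [key, key, coef_congr (hc q h.1) (fun _ _ => rfl),
      coef_congr (hc r hr) (fun _ _ => rfl)] at this
  · exact (affordable_congr (hc q h.1) fun _ _ => rfl).2 h.2.1
  · have := h.2.2 r hr hrq ((affordable_congr (hc r hr) fun _ _ => rfl).1 hra)
    rwa [key, key, ← coef_congr (hc q h.1) (fun _ _ => rfl),
      ← coef_congr (hc r hr) (fun _ _ => rfl)] at this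

end Selection

section Payment

variable {v : V}

lemma pay_of_mem (hv : v ∈ approvers A q) :
    pay A cost b q v = b v - min (b v) (coef A cost b q) :=
  if_pos hv

lemma pay_of_not_mem (hv : v ∉ approvers A q) : pay A cost b q v = b v :=
  if_neg hv

lemma pay_nonneg (hb : 0 ≤ b v) : 0 ≤ pay A cost b q v := by
  unfold pay
  split_ifs
  · linarith [min_le_left (b v) (coef A cost b q)]
  · exact hb

lemma pay_le (hα : 0 ≤ coef A cost b q) (hb : 0 ≤ b v) : pay A cost b q v ≤ b v := by
  unfold pay
  split_ifs
  · linarith [le_min hb hα]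
  · exact le_rfl

lemma pay_congr (hc : cost q = cost' q) : pay A cost b q = pay A cost' b q := by
  funext v
  rw [pay, pay, coef_congr hc fun _ _ => rfl]

end Payment

section Run

lemma run_eq_insert (h : ∃ q ∈ R, Affordable A cost b q) :
    ∃ m, IsSelected A tb cost R b m ∧
      run A tb cost R b = insert m (run A tb cost (R.erase m) (pay A cost b m)) := by
  have hF : (R.filter fun p => (affordSet A (fun bv α _ => min bv α) cost b p).Nonempty).Nonempty :=
    let ⟨q, hq, ha⟩ := h; ⟨q, mem_filter.2 ⟨hq, ha⟩⟩
  have hm := mem_filter.1 (argminBy_mem (key A tb cost b) (lexKey_inj _ tb) _ hF)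
  refine ⟨_, ⟨hm.1, hm.2, fun r hr _ hra => ?_⟩, ?_⟩
  · let _ : LinearOrder P := LinearOrder.lift' _ (lexKey_inj (coef A cost b) tb)
    exact min'_le _ r (mem_filter.2 ⟨hr, hra⟩)
  · rw [run, mesAux, dif_pos hF]
    rfl

lemma run_eq_empty (h : ∀ q ∈ R, ¬ Affordable A cost b q) : run A tb cost R b = ∅ := by
  have hF : ¬ (R.filter fun p => (affordSet A (fun bv α _ => min bv α) cost b p)
      |>.Nonempty).Nonempty := fun ⟨q, hq⟩ => h q (mem_filter.1 hq).1 (mem_filter.1 hq).2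
  rw [run, mesAux, dif_neg hF]

lemma run_eq_insert_of_isSelected (h : IsSelected A tb cost R b q) :
    run A tb cost R b = insert q (run A tb cost (R.erase q) (pay A cost b q)) := by
  obtain ⟨m, hm, hrun⟩ := run_eq_insert (tb := tb) ⟨q, h.1, h.2.1⟩
  rwa [hm.unique h] at hrun

lemma mem_run_of_isSelected (h : IsSelected A tb cost R b q) : q ∈ run A tb cost R b := by
  rw [run_eq_insert_of_isSelected h]
  exact mem_insert_self _ _

lemma run_subset (R : Finset P) (b : V → ℝ) : run A tb cost R b ⊆ R := by
  induction R using strongInduction generalizing b with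
  | H R ih =>
    by_cases h : ∃ q ∈ R, Affordable A cost b q
    · obtain ⟨m, hm, hrun⟩ := run_eq_insert (tb := tb) h
      rw [hrun]
      exact insert_subset hm.1 ((ih _ (erase_ssubset hm.1) _).trans (erase_subset _ _))
    · push Not at h
      rw [run_eq_empty h]
      exact empty_subset _

lemma exists_isSelected_of_run_eq (hR : R.Nonempty) (h : run A tb cost R b = R) :
    ∃ q, IsSelected A tb cost R b q ∧
      run A tb cost (R.erase q) (pay A cost b q) = R.erase q := by
  by_cases ha : ∃ q ∈ R, Affordable A cost b q
  · obtain ⟨m, hm, hrun⟩ := run_eq_insert (tb := tb) ha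
    refine ⟨m, hm, (run_subset _ _).antisymm fun x hx => ?_⟩
    have hxR : x ∈ insert m (run A tb cost (R.erase m) (pay A cost b m)) := by
      rw [← hrun, h]
      exact mem_of_mem_erase hx
    exact (mem_insert.1 hxR).resolve_left (ne_of_mem_erase hx)
  · push Not at ha
    rw [run_eq_empty ha] at h
    exact absurd h.symm hR.ne_empty

/-- A project that drops out does not affect the rest of the run: to show that `p` is bought
at cost `x`, it suffices to follow the purchases of the other projects. -/
lemma mem_run_update_of_isSelected {x : ℝ} (hq : IsSelected A tb cost (R.erase p) b q)
    (hp : p ∈ run A tb (Function.update cost p x) (R.erase q) (pay A cost b q)) :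
    p ∈ run A tb (Function.update cost p x) R b := by
  have hupd : ∀ r ∈ R.erase p, Function.update cost p x r = cost r :=
    fun r hr => Function.update_of_ne (ne_of_mem_erase hr) _ _
  obtain ⟨m, hm, hrun⟩ := run_eq_insert (tb := tb) (cost := Function.update cost p x)
    ⟨q, mem_of_mem_erase hq.1, (affordable_congr (hupd q hq.1) fun _ _ => rfl).2 hq.2.1⟩
  rw [hrun]
  by_cases hmp : m = p
  · exact hmp ▸ mem_insert_self _ _
  · obtain rfl : m = q := ((isSelected_congr hupd).1 (hm.erase hmp)).unique hq
    rw [pay_congr (hupd m hq.1)]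
    exact mem_insert_of_mem hp

lemma mem_run_of_pool {S : Finset V} (hpR : p ∈ R) (hc : 0 ≤ cost p) (hb : ∀ v, 0 ≤ b v)
    (hS : S ⊆ approvers A p) (hfree : ∀ q ∈ R, q ≠ p → Disjoint S (approvers A q))
    (hle : cost p ≤ ∑ v ∈ S, b v) : p ∈ run A tb cost R b := by
  induction R using strongInduction generalizing b with
  | H R ih =>
    have ha : Affordable A cost b p := affordable_of_cost_le_sum hc hb
      (hle.trans (sum_le_sum_of_subset_of_nonneg hS fun v _ _ => hb v))
    obtain ⟨m, hm, hrun⟩ := run_eq_insert (tb := tb) ⟨p, hpR, ha⟩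
    rw [hrun]
    by_cases hmp : m = p
    · exact hmp ▸ mem_insert_self _ _
    · have hSm : ∀ v ∈ S, pay A cost b m v = b v := fun v hv =>
        pay_of_not_mem (disjoint_left.1 (hfree m hm.1 hmp) hv)
      refine mem_insert_of_mem (ih _ (erase_ssubset hm.1) (mem_erase.2 ⟨Ne.symm hmp, hpR⟩)
        (fun v => pay_nonneg (hb v)) (fun q hq => hfree q (mem_of_mem_erase hq)) ?_)
      rwa [sum_congr rfl hSm]

lemma cost_le_sum_of_mem_run (hc : ∀ q, 0 ≤ cost q) (hne : ∀ q, (approvers A q).Nonempty)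
    (hb : ∀ v, 0 ≤ b v) (hp : p ∈ run A tb cost R b) :
    cost p ≤ ∑ v ∈ approvers A p, b v := by
  induction R using strongInduction generalizing b with
  | H R ih =>
    by_cases h : ∃ q ∈ R, Affordable A cost b q
    · obtain ⟨m, hm, hrun⟩ := run_eq_insert (tb := tb) h
      rcases mem_insert.1 (hrun ▸ hp) with rfl | hp
      · exact hm.2.1.cost_le_sum
      · exact (ih _ (erase_ssubset hm.1) (fun v => pay_nonneg (hb v)) hp).trans
          (sum_le_sum fun v _ => pay_le (coef_nonneg (hne m) (hc m)) (hb v))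
    · push Not at h
      rw [run_eq_empty h] at hp
      exact absurd hp (notMem_empty p)

end Run

end MesApr

/-! ### The example -/

namespace ExA19

open PB MesApr Finset

def excl (p : Fin 4) : Finset (Fin 16) := (approvers exA19 p).filter fun v => exA19 v = {p}

def Adj (p q : Fin 4) : Prop := p ≠ q ∧ ¬ Disjoint (approvers exA19 p) (approvers exA19 q)

instance : DecidableRel Adj := fun p q => by unfold Adj; infer_instance

def shared (p q : Fin 4) : Fin 16 :=
  if h : (approvers exA19 p ∩ approvers exA19 q).Nonempty then
    (approvers exA19 p ∩ approvers exA19 q).min' h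
  else 0

variable {p q r t : Fin 4} {v : Fin 16}

lemma card_approvers (p : Fin 4) : (approvers exA19 p).card = 5 := by revert p; decide

lemma approvers_nonempty (p : Fin 4) : (approvers exA19 p).Nonempty :=
  card_pos.1 (by rw [card_approvers]; norm_num)

lemma card_excl (p : Fin 4) : (excl p).card = 3 := by revert p; decide

lemma excl_nonempty (p : Fin 4) : (excl p).Nonempty :=
  card_pos.1 (by rw [card_excl]; norm_num)

lemma excl_subset (p : Fin 4) : excl p ⊆ approvers exA19 p := filter_subset _ _

lemma mem_approvers_iff_of_mem_excl (hv : v ∈ excl p) : v ∈ approvers exA19 t ↔ t = p := by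
  simp [approvers, (mem_filter.1 hv).2]

lemma Adj.ne (h : Adj p q) : p ≠ q := h.1

lemma Adj.symm (h : Adj p q) : Adj q p := ⟨h.1.symm, fun hd => h.2 hd.symm⟩

lemma disjoint_of_not_adj (hpq : p ≠ q) (h : ¬ Adj p q) :
    Disjoint (approvers exA19 p) (approvers exA19 q) := by
  by_contra hd
  exact h ⟨hpq, hd⟩

lemma shared_comm (p q : Fin 4) : shared p q = shared q p := by
  simp only [shared, inter_comm]

lemma shared_mem_approvers_iff (h : Adj p q) :
    shared p q ∈ approvers exA19 t ↔ t = p ∨ t = q := by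
  revert p q t; decide

lemma approvers_eq_of_adj (hq : Adj p q) (hr : Adj p r) (hqr : q ≠ r) :
    approvers exA19 p = insert (shared p q) (insert (shared p r) (excl p)) ∧
      shared p q ∉ insert (shared p r) (excl p) ∧ shared p r ∉ excl p := by
  revert p q r; decide

lemma adj_of_not_adj {a b c d : Fin 4} (hd : [a, b, c, d].Nodup) (h : ¬ Adj a b) :
    Adj a c ∧ Adj a d ∧ Adj b c ∧ Adj b d ∧ ¬ Adj c d := by
  revert a b c d; decide

lemma adj_of_adj_of_adj {a b c d : Fin 4} (hd : [a, b, c, d].Nodup) (hb : Adj a b)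
    (hc : Adj a c) : ¬ Adj a d ∧ ¬ Adj b c ∧ Adj b d ∧ Adj c d := by
  revert a b c d; decide

lemma sum_approvers (hq : Adj p q) (hr : Adj p r) (hqr : q ≠ r) (f : Fin 16 → ℝ) :
    ∑ v ∈ approvers exA19 p, f v = f (shared p q) + f (shared p r) + ∑ v ∈ excl p, f v := by
  obtain ⟨he, hnq, hnr⟩ := approvers_eq_of_adj hq hr hqr
  rw [he, sum_insert hnq, sum_insert hnr, add_assoc]

lemma sum_excl_eq {f : Fin 16 → ℝ} {x : ℝ} (h : ∀ v ∈ excl p, f v = x) :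
    ∑ v ∈ excl p, f v = 3 * x := by
  rw [sum_congr rfl h, sum_const, card_excl, nsmul_eq_mul, Nat.cast_ofNat]

lemma pay_shared_of_ne {c : Fin 4 → ℝ} {b : Fin 16 → ℝ} (h : Adj p q) (hp : r ≠ p)
    (hq : r ≠ q) : pay exA19 c b r (shared p q) = b (shared p q) :=
  pay_of_not_mem fun hm => ((shared_mem_approvers_iff h).1 hm).elim hp hq

section Local

variable {c : Fin 4 → ℝ} {b : Fin 16 → ℝ} {β α₀ : ℝ}

lemma sum_min_approvers (hq : Adj p q) (hr : Adj p r) (hqr : q ≠ r)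
    (hex : ∀ v ∈ excl p, b v = β) (α : ℝ) :
    ∑ v ∈ approvers exA19 p, min (b v) α =
      min (b (shared p q)) α + min (b (shared p r)) α + 3 * min β α := by
  rw [sum_approvers hq hr hqr, sum_excl_eq fun v hv => by rw [hex v hv]]

lemma coef_eq_of_local (hq : Adj p q) (hr : Adj p r) (hqr : q ≠ r)
    (hex : ∀ v ∈ excl p, b v = β) (hα : α₀ ≤ β)
    (h : min (b (shared p q)) α₀ + min (b (shared p r)) α₀ + 3 * min β α₀ = c p) :
    coef exA19 c b p = α₀ ∧ Affordable exA19 c b p := by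
  have hsum := (sum_min_approvers hq hr hqr hex α₀).trans h
  obtain ⟨v, hv⟩ := excl_nonempty p
  exact ⟨coef_eq_of_sum_eq hsum ⟨v, excl_subset p hv, (hex v hv).symm ▸ hα⟩, ⟨α₀, hsum⟩⟩

lemma local_eq_of_affordable (hq : Adj p q) (hr : Adj p r) (hqr : q ≠ r)
    (hex : ∀ v ∈ excl p, b v = β) (ha : Affordable exA19 c b p) :
    min (b (shared p q)) (coef exA19 c b p) + min (b (shared p r)) (coef exA19 c b p) +
      3 * min β (coef exA19 c b p) = c p :=
  (sum_min_approvers hq hr hqr hex _).symm.trans (ha.sum_min_coef (approvers_nonempty p))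

lemma sum_approvers_local (hq : Adj p q) (hr : Adj p r) (hqr : q ≠ r)
    (hex : ∀ v ∈ excl p, b v = β) :
    ∑ v ∈ approvers exA19 p, b v = b (shared p q) + b (shared p r) + 3 * β := by
  rw [sum_approvers hq hr hqr, sum_excl_eq hex]

lemma coef_of_full (hb : ∀ v ∈ approvers exA19 p, b v = β) (hc : c p ≤ 5 * β) :
    coef exA19 c b p = c p / 5 ∧ Affordable exA19 c b p := by
  have hsum : ∑ v ∈ approvers exA19 p, min (b v) (c p / 5) = c p := by
    rw [sum_congr rfl fun v hv => by rw [hb v hv, min_eq_right (by linarith)], sum_const,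
      card_approvers, nsmul_eq_mul]
    ring
  obtain ⟨v, hv⟩ := approvers_nonempty p
  exact ⟨coef_eq_of_sum_eq hsum ⟨v, hv, by rw [hb v hv]; linarith⟩, ⟨_, hsum⟩⟩

end Local

section Money

variable (β : ℝ) (c : Fin 4 → ℝ)

/-- The money of the voters after the projects in `l` were bought, the last purchase first. -/
def money : List (Fin 4) → Fin 16 → ℝ
  | [] => fun _ => β
  | q :: l => pay exA19 c (money l) q

variable {β c}

lemma money_nonneg (hβ : 0 ≤ β) (l : List (Fin 4)) (v : Fin 16) : 0 ≤ money β c l v := by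
  induction l generalizing v with
  | nil => exact hβ
  | cons q l ih => exact pay_nonneg (ih v)

lemma money_le (hc : ∀ p, 0 ≤ c p) (hβ : 0 ≤ β) (l : List (Fin 4)) (v : Fin 16) :
    money β c l v ≤ β := by
  induction l generalizing v with
  | nil => exact le_rfl
  | cons q l ih =>
    exact (pay_le (coef_nonneg (approvers_nonempty q) (hc q)) (money_nonneg hβ l v)).trans (ih v)

lemma money_eq_of_forall_not_mem {l : List (Fin 4)} (hv : ∀ r ∈ l, v ∉ approvers exA19 r) :
    money β c l v = β := by
  induction l with
  | nil => rfl
  | cons q l ih =>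
    rw [money, pay_of_not_mem (hv q List.mem_cons_self)]
    exact ih fun r hr => hv r (List.mem_cons_of_mem q hr)

lemma money_excl {l : List (Fin 4)} (hv : v ∈ excl p) (hp : p ∉ l) : money β c l v = β :=
  money_eq_of_forall_not_mem fun _ hr hm =>
    hp ((mem_approvers_iff_of_mem_excl hv).1 hm ▸ hr)

lemma money_shared {l : List (Fin 4)} (h : Adj p q) (hp : p ∉ l) (hq : q ∉ l) :
    money β c l (shared p q) = β :=
  money_eq_of_forall_not_mem fun _ hr hm =>
    ((shared_mem_approvers_iff h).1 hm).elim (fun e => hp (e ▸ hr)) (fun e => hq (e ▸ hr))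

end Money

section Quadruple

variable {a b c d r : Fin 4}

lemma eq_or_eq_or_eq_or_eq_of_nodup (hd : [a, b, c, d].Nodup) (r : Fin 4) :
    r = a ∨ r = b ∨ r = c ∨ r = d := by
  revert a b c d r; decide

lemma ne_of_nodup (hd : [a, b, c, d].Nodup) :
    a ≠ b ∧ a ≠ c ∧ a ≠ d ∧ b ≠ c ∧ b ≠ d ∧ c ≠ d := by
  simp only [List.nodup_cons, List.mem_cons, List.not_mem_nil, List.nodup_nil, not_or] at hd
  tauto

end Quadruple

/-- What the proof uses of an MES-Apr equilibrium `c` with initial money `β` per voter whose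
run buys `q₁, q₂, q₃, q₄` in this order. -/
structure IsNERun (tb : Fin 4 ↪ ℕ) (β : ℝ) (c : Fin 4 → ℝ) (q₁ q₂ q₃ q₄ : Fin 4) : Prop where
  pos : 0 < β
  three_mul_le : ∀ p, 3 * β ≤ c p
  le_five_mul : ∀ p, c p ≤ 5 * β
  stable : ∀ p x, 0 ≤ x →
    p ∈ run exA19 tb (Function.update c p x) univ (money β c []) → x ≤ c p
  sel₁ : IsSelected exA19 tb c univ (money β c []) q₁
  sel₂ : IsSelected exA19 tb c (univ.erase q₁) (money β c [q₁]) q₂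
  sel₃ : IsSelected exA19 tb c ((univ.erase q₁).erase q₂) (money β c [q₂, q₁]) q₃
  sel₄ : IsSelected exA19 tb c (((univ.erase q₁).erase q₂).erase q₃) (money β c [q₃, q₂, q₁]) q₄

lemma mesApr_eq_run (tb : Fin 4 ↪ ℕ) (B : ℝ) (cost : Fin 4 → ℝ) :
    mesApr exA19 tb B cost = run exA19 tb cost univ fun _ => B / 16 := by
  simp [mesApr, run]

lemma nonempty_erase_erase_erase :
    ∀ a b c : Fin 4, (((univ.erase a).erase b).erase c).Nonempty := by
  decide

lemma mem_run_update_three_mul (tb : Fin 4 ↪ ℕ) {β : ℝ} (hβ : 0 < β) (c : Fin 4 → ℝ) (p : Fin 4) :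
    p ∈ run exA19 tb (Function.update c p (3 * β)) univ fun _ => β :=
  mem_run_of_pool (S := excl p) (mem_univ p) (by rw [Function.update_self]; linarith)
    (fun _ => hβ.le) (excl_subset p)
    (fun q _ hqp => disjoint_left.2 fun v hv hm => hqp ((mem_approvers_iff_of_mem_excl hv).1 hm))
    (by rw [Function.update_self, sum_excl_eq fun v _ => rfl])

lemma exists_isNERun {tb : Fin 4 ↪ ℕ} {B : ℝ} (hB : 0 < B) {c : Fin 4 → ℝ}
    (hc : isNE (mesApr exA19 tb B) (fun _ => 0) c) :
    ∃ q₁ q₂ q₃ q₄, IsNERun tb (B / 16) c q₁ q₂ q₃ q₄ := by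
  obtain ⟨hc0, hdev⟩ := hc
  simp only [mesApr_eq_run, payoff, sub_zero] at hdev
  have hβ : 0 < B / 16 := by positivity
  have hfunded : ∀ p, p ∈ run exA19 tb c univ (fun _ => B / 16) ∧ 3 * (B / 16) ≤ c p := by
    intro p
    have := hdev p (3 * (B / 16)) (by linarith)
    rw [if_pos (mem_run_update_three_mul tb hβ c p), Function.update_self] at this
    split_ifs at this with hp
    · exact ⟨hp, this⟩
    · linarith
  have hrun : run exA19 tb c univ (fun _ => B / 16) = univ :=
    eq_univ_of_forall fun p => (hfunded p).1
  have hne := nonempty_erase_erase_erase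
  obtain ⟨q₁, sel₁, hrun₁⟩ := exists_isSelected_of_run_eq univ_nonempty hrun
  obtain ⟨q₂, sel₂, hrun₂⟩ := exists_isSelected_of_run_eq
    ((hne q₁ q₁ q₁).mono ((erase_subset _ _).trans (erase_subset _ _))) hrun₁
  obtain ⟨q₃, sel₃, hrun₃⟩ := exists_isSelected_of_run_eq
    ((hne q₁ q₂ q₂).mono (erase_subset _ _)) hrun₂
  obtain ⟨q₄, sel₄, -⟩ := exists_isSelected_of_run_eq (hne q₁ q₂ q₃) hrun₃
  refine ⟨q₁, q₂, q₃, q₄, hβ, fun p => (hfunded p).2, fun p => ?_, fun p x hx hp => ?_,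
    sel₁, sel₂, sel₃, sel₄⟩
  · have := cost_le_sum_of_mem_run hc0 approvers_nonempty (fun _ => hβ.le) (hfunded p).1
    rwa [sum_const, card_approvers, nsmul_eq_mul, Nat.cast_ofNat] at this
  · have := hdev p x hx
    rw [money] at hp
    rwa [if_pos hp, Function.update_self, if_pos (hfunded p).1] at this

namespace IsNERun

variable {tb : Fin 4 ↪ ℕ} {β : ℝ} {c : Fin 4 → ℝ} {q₁ q₂ q₃ q₄ r : Fin 4}

lemma nodup (h : IsNERun tb β c q₁ q₂ q₃ q₄) : [q₁, q₂, q₃, q₄].Nodup := by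
  have h₂ := h.sel₂.1
  have h₃ := h.sel₃.1
  have h₄ := h.sel₄.1
  simp only [mem_erase, mem_univ, and_true] at h₂ h₃ h₄
  simp only [List.nodup_cons, List.mem_cons, List.not_mem_nil, List.nodup_nil, not_or]
  tauto

lemma ne₁₂ (h : IsNERun tb β c q₁ q₂ q₃ q₄) : q₁ ≠ q₂ := (ne_of_nodup h.nodup).1
lemma ne₁₃ (h : IsNERun tb β c q₁ q₂ q₃ q₄) : q₁ ≠ q₃ := (ne_of_nodup h.nodup).2.1
lemma ne₁₄ (h : IsNERun tb β c q₁ q₂ q₃ q₄) : q₁ ≠ q₄ := (ne_of_nodup h.nodup).2.2.1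
lemma ne₂₃ (h : IsNERun tb β c q₁ q₂ q₃ q₄) : q₂ ≠ q₃ := (ne_of_nodup h.nodup).2.2.2.1
lemma ne₂₄ (h : IsNERun tb β c q₁ q₂ q₃ q₄) : q₂ ≠ q₄ := (ne_of_nodup h.nodup).2.2.2.2.1
lemma ne₃₄ (h : IsNERun tb β c q₁ q₂ q₃ q₄) : q₃ ≠ q₄ := (ne_of_nodup h.nodup).2.2.2.2.2

lemma eq_or_eq_or_eq_or_eq (h : IsNERun tb β c q₁ q₂ q₃ q₄) (r : Fin 4) :
    r = q₁ ∨ r = q₂ ∨ r = q₃ ∨ r = q₄ :=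
  eq_or_eq_or_eq_or_eq_of_nodup h.nodup r

lemma money_le (h : IsNERun tb β c q₁ q₂ q₃ q₄) (l : List (Fin 4)) (v : Fin 16) :
    money β c l v ≤ β :=
  ExA19.money_le (fun p => by linarith [h.three_mul_le p, h.pos]) h.pos.le l v

lemma coef_initial (h : IsNERun tb β c q₁ q₂ q₃ q₄) (p : Fin 4) :
    coef exA19 c (money β c []) p = c p / 5 ∧ Affordable exA19 c (money β c []) p :=
  coef_of_full (fun _ _ => rfl) (h.le_five_mul p)

lemma cost_first_le (h : IsNERun tb β c q₁ q₂ q₃ q₄) (r : Fin 4) : c q₁ ≤ c r := by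
  by_cases hr : r = q₁
  · rw [hr]
  · have := coef_le_of_key_le (h.sel₁.2.2 r (mem_univ r) hr (h.coef_initial r).2)
    rw [(h.coef_initial q₁).1, (h.coef_initial r).1] at this
    linarith

lemma money_first (h : IsNERun tb β c q₁ q₂ q₃ q₄) (v : Fin 16) :
    money β c [q₁] v = if v ∈ approvers exA19 q₁ then β - c q₁ / 5 else β := by
  rw [money, pay, (h.coef_initial q₁).1, money, min_eq_right (by linarith [h.le_five_mul q₁])]

lemma cost_last (h : IsNERun tb β c q₁ q₂ q₃ q₄) :
    c q₄ = ∑ v ∈ approvers exA19 q₄, money β c [q₃, q₂, q₁] v := by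
  have hx := sum_nonneg fun v (_ : v ∈ approvers exA19 q₄) =>
    money_nonneg (c := c) h.pos.le [q₃, q₂, q₁] v
  refine le_antisymm h.sel₄.2.1.cost_le_sum (h.stable q₄ _ hx ?_)
  refine mem_run_update_of_isSelected (h.sel₁.erase h.ne₁₄) ?_
  refine mem_run_update_of_isSelected (h.sel₂.erase h.ne₂₄) ?_
  refine mem_run_update_of_isSelected (h.sel₃.erase h.ne₃₄) ?_
  refine mem_run_of_pool h.sel₄.1 (by rwa [Function.update_self])
    (money_nonneg (c := c) h.pos.le [q₃, q₂, q₁]) subset_rfl (fun q hq hq₄ => ?_)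
    (by rw [Function.update_self]; exact le_rfl)
  simp only [mem_erase, mem_univ, and_true] at hq
  obtain rfl | rfl | rfl | rfl := h.eq_or_eq_or_eq_or_eq q <;> simp_all

lemma money_first_of_mem (h : IsNERun tb β c q₁ q₂ q₃ q₄) {v : Fin 16}
    (hv : v ∈ approvers exA19 q₁) : money β c [q₁] v = β - c q₁ / 5 := by
  rw [h.money_first, if_pos hv]

lemma money_first_of_not_mem (h : IsNERun tb β c q₁ q₂ q₃ q₄) {v : Fin 16}
    (hv : v ∉ approvers exA19 q₁) : money β c [q₁] v = β := by
  rw [h.money_first, if_neg hv]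

/-! ### The first two projects are opposite -/

section Opposite

lemma coef_second_of_not_adj (h : IsNERun tb β c q₁ q₂ q₃ q₄) (hn : ¬ Adj q₁ q₂) :
    coef exA19 c (money β c [q₁]) q₂ = c q₂ / 5 ∧ Affordable exA19 c (money β c [q₁]) q₂ :=
  coef_of_full (fun _ hv => h.money_first_of_not_mem
    (disjoint_right.1 (disjoint_of_not_adj h.ne₁₂ hn) hv)) (h.le_five_mul q₂)

lemma money_two_of_not_adj (h : IsNERun tb β c q₁ q₂ q₃ q₄) (hn : ¬ Adj q₁ q₂)
    (hr₁ : Adj q₁ r) (hr₂ : Adj q₂ r) :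
    money β c [q₂, q₁] (shared q₁ r) = β - c q₁ / 5 ∧
      money β c [q₂, q₁] (shared q₂ r) = β - c q₂ / 5 := by
  have hmem := fun {p q t : Fin 4} (hpq : Adj p q) => (shared_mem_approvers_iff hpq (t := t))
  constructor
  · rw [money, pay_of_not_mem, h.money_first_of_mem ((hmem hr₁).2 (Or.inl rfl))]
    rw [hmem hr₁]
    rintro (e | e)
    exacts [h.ne₁₂ e.symm, hr₂.ne e]
  · rw [money, pay_of_mem ((hmem hr₂).2 (Or.inl rfl)), (h.coef_second_of_not_adj hn).1,
      h.money_first_of_not_mem, min_eq_right (by linarith [h.le_five_mul q₂])]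
    rw [hmem hr₂]
    rintro (e | e)
    exacts [h.ne₁₂ e, hr₁.ne e]

lemma sum_money_two_of_not_adj (h : IsNERun tb β c q₁ q₂ q₃ q₄) (hn : ¬ Adj q₁ q₂)
    (hr₁ : Adj q₁ r) (hr₂ : Adj q₂ r) :
    ∑ v ∈ approvers exA19 r, money β c [q₂, q₁] v = 5 * β - c q₁ / 5 - c q₂ / 5 := by
  obtain ⟨h₁, h₂⟩ := h.money_two_of_not_adj hn hr₁ hr₂
  have hex : ∀ v ∈ excl r, money β c [q₂, q₁] v = β := fun v hv => money_excl hv (by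
    simp [hr₁.ne.symm, hr₂.ne.symm])
  rw [sum_approvers_local hr₁.symm hr₂.symm h.ne₁₂ hex, shared_comm, h₁, shared_comm, h₂]
  ring

lemma cost_third_of_not_adj (h : IsNERun tb β c q₁ q₂ q₃ q₄) (hn : ¬ Adj q₁ q₂) :
    c q₃ = 5 * β - c q₁ / 5 - c q₂ / 5 := by
  obtain ⟨h₁₃, -, h₂₃, -, hn₃₄⟩ := adj_of_not_adj h.nodup hn
  have hpool := h.sum_money_two_of_not_adj hn h₁₃ h₂₃
  have hx : 0 ≤ 5 * β - c q₁ / 5 - c q₂ / 5 := by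
    linarith [h.le_five_mul q₁, h.le_five_mul q₂, h.pos]
  refine le_antisymm (hpool ▸ h.sel₃.2.1.cost_le_sum) (h.stable q₃ _ hx ?_)
  refine mem_run_update_of_isSelected (h.sel₁.erase h₁₃.ne) ?_
  refine mem_run_update_of_isSelected (h.sel₂.erase h₂₃.ne) ?_
  refine mem_run_of_pool h.sel₃.1 (by rwa [Function.update_self])
    (money_nonneg (c := c) h.pos.le [q₂, q₁]) subset_rfl (fun q hq hq₃ => ?_)
    (by rw [Function.update_self]; exact hpool.ge)
  simp only [mem_erase, mem_univ, and_true] at hq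
  obtain rfl | rfl | rfl | rfl := h.eq_or_eq_or_eq_or_eq q
  · exact absurd rfl hq.2
  · exact absurd rfl hq.1
  · exact absurd rfl hq₃
  · exact disjoint_of_not_adj h.ne₃₄ hn₃₄

lemma cost_fourth_of_not_adj (h : IsNERun tb β c q₁ q₂ q₃ q₄) (hn : ¬ Adj q₁ q₂) :
    c q₄ = 5 * β - c q₁ / 5 - c q₂ / 5 := by
  obtain ⟨-, h₁₄, -, h₂₄, hn₃₄⟩ := adj_of_not_adj h.nodup hn
  rw [h.cost_last, ← h.sum_money_two_of_not_adj hn h₁₄ h₂₄]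
  exact sum_congr rfl fun v hv => pay_of_not_mem
    (disjoint_right.1 (disjoint_of_not_adj h.ne₃₄ hn₃₄) hv)

lemma coef_of_not_adj (h : IsNERun tb β c q₁ q₂ q₃ q₄) (hn : ¬ Adj q₁ q₂)
    (hr₁ : Adj q₁ r) (hr₂ : Adj q₂ r) (hc : c r = 5 * β - c q₁ / 5 - c q₂ / 5) :
    (coef exA19 c (money β c [q₁]) r = β - c q₂ / 20 ∧ Affordable exA19 c (money β c [q₁]) r) ∧
      (coef exA19 c (money β c [q₂, q₁]) r = β ∧ Affordable exA19 c (money β c [q₂, q₁]) r) := by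
  obtain ⟨h₁, h₂⟩ := h.money_two_of_not_adj hn hr₁ hr₂
  have hl : ∀ l : List (Fin 4), r ∉ l → ∀ v ∈ excl r, money β c l v = β :=
    fun l hl v hv => money_excl hv hl
  have hr : r ∉ [q₂, q₁] := by simp [hr₁.ne.symm, hr₂.ne.symm]
  have h₁' : money β c [q₁] (shared r q₁) = β - c q₁ / 5 :=
    shared_comm r q₁ ▸ h.money_first_of_mem ((shared_mem_approvers_iff hr₁).2 (Or.inl rfl))
  have h₂' : money β c [q₁] (shared r q₂) = β := by
    rw [shared_comm]
    refine h.money_first_of_not_mem fun hm => ?_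
    rcases (shared_mem_approvers_iff hr₂).1 hm with e | e
    exacts [h.ne₁₂ e, hr₁.ne e]
  have := h.pos
  have := h.three_mul_le q₁
  have := h.three_mul_le q₂
  have := h.le_five_mul q₂
  constructor
  · refine coef_eq_of_local hr₁.symm hr₂.symm h.ne₁₂ (hl _ (by simpa using hr₁.ne.symm))
      (by linarith) ?_
    rw [h₁', h₂', min_eq_left (by linarith), min_eq_right (by linarith), hc]
    ring
  · refine coef_eq_of_local hr₁.symm hr₂.symm h.ne₁₂ (hl _ hr) le_rfl ?_
    rw [shared_comm, h₁, shared_comm, h₂, min_eq_left (by linarith),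
      min_eq_left (by linarith), min_self, hc]
    ring

lemma tb_third_le_fourth_of_not_adj (h : IsNERun tb β c q₁ q₂ q₃ q₄) (hn : ¬ Adj q₁ q₂) :
    tb q₃ ≤ tb q₄ := by
  obtain ⟨h₁₃, h₁₄, h₂₃, h₂₄, -⟩ := adj_of_not_adj h.nodup hn
  obtain ⟨-, hα₃, -⟩ := h.coef_of_not_adj hn h₁₃ h₂₃ (h.cost_third_of_not_adj hn)
  obtain ⟨-, hα₄, ha₄⟩ := h.coef_of_not_adj hn h₁₄ h₂₄ (h.cost_fourth_of_not_adj hn)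
  have hk := h.sel₃.2.2 q₄ (by simp [h₁₄.ne.symm, h₂₄.ne.symm]) h.ne₃₄.symm ha₄
  exact tb_le_of_key_le hk (hα₃.trans hα₄.symm)

lemma cost_second_of_not_adj (h : IsNERun tb β c q₁ q₂ q₃ q₄) (hn : ¬ Adj q₁ q₂) :
    c q₂ = 4 * β := by
  obtain ⟨h₁₃, h₁₄, h₂₃, h₂₄, -⟩ := adj_of_not_adj h.nodup hn
  obtain ⟨⟨hα₃, ha₃⟩, -⟩ := h.coef_of_not_adj hn h₁₃ h₂₃ (h.cost_third_of_not_adj hn)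
  obtain ⟨⟨hα₄, -⟩, -⟩ := h.coef_of_not_adj hn h₁₄ h₂₄ (h.cost_fourth_of_not_adj hn)
  obtain ⟨hα₂, -⟩ := h.coef_second_of_not_adj hn
  have hle := coef_le_of_key_le (h.sel₂.2.2 q₃ (by simp [h₁₃.ne.symm]) h₂₃.ne.symm ha₃)
  rw [hα₂, hα₃] at hle
  by_contra hne
  -- with cost `x > c q₂`, `q₂` is still bought in the second round
  have hlt : c q₂ < 4 * β := lt_of_le_of_ne (by linarith) hne
  set x := (3 * c q₂ / 4 + 5 * β) / 2 with hxdef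
  have hx : c q₂ < x := by linarith
  have hfull : ∀ v ∈ approvers exA19 q₂, money β c [q₁] v = β := fun _ hv =>
    h.money_first_of_not_mem (disjoint_right.1 (disjoint_of_not_adj h.ne₁₂ hn) hv)
  obtain ⟨hαx, hax⟩ := coef_of_full (c := Function.update c q₂ x) hfull
    (by rw [Function.update_self]; linarith [h.pos])
  refine (h.stable q₂ x (by linarith [h.three_mul_le q₂, h.pos]) ?_).not_gt hx
  refine mem_run_update_of_isSelected (h.sel₁.erase h.ne₁₂)
    (mem_run_of_isSelected (isSelected_of_coef_lt (b := money β c [q₁])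
      (by simp [h.ne₁₂.symm]) hax fun r hr hr₂ _ => ?_))
  rw [hαx, Function.update_self, coef_congr (Function.update_of_ne hr₂ _ _) fun _ _ => rfl]
  obtain rfl | rfl | rfl | rfl := h.eq_or_eq_or_eq_or_eq r
  · simp at hr
  · exact absurd rfl hr₂
  · rw [hα₃]; linarith
  · rw [hα₄]; linarith

lemma isSelected_third_of_not_adj (h : IsNERun tb β c q₁ q₂ q₃ q₄)
    (hn : ¬ Adj q₁ q₂) : IsSelected exA19 tb c (univ.erase q₁) (money β c []) q₃ := by
  have hc₃ := h.cost_third_of_not_adj hn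
  refine ⟨by simp [h.ne₁₃.symm], (h.coef_initial q₃).2, fun r hr hr₃ _ => ?_⟩
  obtain rfl | rfl | rfl | rfl := h.eq_or_eq_or_eq_or_eq r
  · simp at hr
  · refine key_le_of_coef_lt ?_
    rw [(h.coef_initial q₃).1, (h.coef_initial _).1, hc₃, h.cost_second_of_not_adj hn]
    linarith [h.three_mul_le q₁, h.pos]
  · exact absurd rfl hr₃
  · refine key_le_of_coef_eq ?_ (h.tb_third_le_fourth_of_not_adj hn)
    rw [(h.coef_initial q₃).1, (h.coef_initial _).1, hc₃, h.cost_fourth_of_not_adj hn]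

lemma coef_fourth_of_not_adj (h : IsNERun tb β c q₁ q₂ q₃ q₄) (hn : ¬ Adj q₁ q₂) :
    (∀ v ∈ approvers exA19 q₄, money β c [q₃] v = β) ∧
      coef exA19 c (money β c [q₃]) q₄ = c q₄ / 5 ∧ Affordable exA19 c (money β c [q₃]) q₄ := by
  have hfull : ∀ v ∈ approvers exA19 q₄, money β c [q₃] v = β := fun v hv =>
    pay_of_not_mem (disjoint_right.1 (disjoint_of_not_adj h.ne₃₄
      (adj_of_not_adj h.nodup hn).2.2.2.2) hv)
  exact ⟨hfull, coef_of_full hfull (h.le_five_mul q₄)⟩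

lemma isSelected_fourth_of_not_adj (h : IsNERun tb β c q₁ q₂ q₃ q₄)
    (hn : ¬ Adj q₁ q₂) :
    IsSelected exA19 tb c ((univ.erase q₃).erase q₁) (money β c [q₃]) q₄ := by
  obtain ⟨-, hα₄, ha₄⟩ := h.coef_fourth_of_not_adj hn
  refine ⟨by simp [h.ne₁₄.symm, h.ne₃₄.symm], ha₄, fun r hr hr₄ hra => key_le_of_coef_lt ?_⟩
  have := hra.cost_le_card_mul_coef (approvers_nonempty r)
  rw [card_approvers, Nat.cast_ofNat] at this
  obtain rfl | rfl | rfl | rfl := h.eq_or_eq_or_eq_or_eq r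
  · simp at hr
  · rw [h.cost_second_of_not_adj hn] at this
    rw [hα₄, h.cost_fourth_of_not_adj hn, h.cost_second_of_not_adj hn]
    linarith [h.three_mul_le q₁, h.pos]
  · simp at hr
  · exact absurd rfl hr₄

lemma sum_money_third_fourth_of_not_adj (h : IsNERun tb β c q₁ q₂ q₃ q₄)
    (hn : ¬ Adj q₁ q₂) :
    ∑ v ∈ approvers exA19 q₁, money β c [q₄, q₃] v = 5 * β - c q₃ / 5 - c q₄ / 5 := by
  obtain ⟨h₁₃, h₁₄, -, -, -⟩ := adj_of_not_adj h.nodup hn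
  obtain ⟨hfull, hα₄, -⟩ := h.coef_fourth_of_not_adj hn
  have hex : ∀ v ∈ excl q₁, money β c [q₄, q₃] v = β := fun v hv =>
    money_excl hv (by simp [h.ne₁₃, h.ne₁₄])
  have hm₁₄ := (shared_mem_approvers_iff h₁₄).2 (Or.inr rfl)
  have h₃ : money β c [q₄, q₃] (shared q₁ q₃) = β - c q₃ / 5 := by
    rw [money, pay_shared_of_ne h₁₃ h.ne₁₄.symm h.ne₃₄.symm, money,
      pay_of_mem ((shared_mem_approvers_iff h₁₃).2 (Or.inr rfl)), (h.coef_initial q₃).1, money,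
      min_eq_right (by linarith [h.le_five_mul q₃])]
  have h₄ : money β c [q₄, q₃] (shared q₁ q₄) = β - c q₄ / 5 := by
    rw [money, pay_of_mem hm₁₄, hα₄, hfull _ hm₁₄, min_eq_right (by linarith [h.le_five_mul q₄])]
  rw [sum_approvers_local h₁₃ h₁₄ h.ne₃₄ hex, h₃, h₄]
  ring

lemma cost_first_ge_of_not_adj (h : IsNERun tb β c q₁ q₂ q₃ q₄) (hn : ¬ Adj q₁ q₂) :
    5 * β - c q₃ / 5 - c q₄ / 5 ≤ c q₁ := by
  have hpool := h.sum_money_third_fourth_of_not_adj hn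
  have hx : 0 ≤ 5 * β - c q₃ / 5 - c q₄ / 5 := by
    linarith [h.pos, h.le_five_mul q₃, h.le_five_mul q₄]
  refine h.stable q₁ _ hx ?_
  refine mem_run_update_of_isSelected (h.isSelected_third_of_not_adj hn) ?_
  refine mem_run_update_of_isSelected (h.isSelected_fourth_of_not_adj hn) ?_
  refine mem_run_of_pool (by simp [h.ne₁₃, h.ne₁₄]) (by rwa [Function.update_self])
    (money_nonneg (c := c) h.pos.le [q₄, q₃]) subset_rfl (fun q hq hq₁ => ?_)
    (by rw [Function.update_self]; exact hpool.ge)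
  obtain rfl | rfl | rfl | rfl := h.eq_or_eq_or_eq_or_eq q
  · exact absurd rfl hq₁
  · exact disjoint_of_not_adj h.ne₁₂ hn
  · simp at hq
  · simp at hq

lemma false_of_not_adj (h : IsNERun tb β c q₁ q₂ q₃ q₄) (hn : ¬ Adj q₁ q₂) : False := by
  have := h.cost_first_le q₃
  have := h.cost_first_ge_of_not_adj hn
  have := h.cost_second_of_not_adj hn
  have := h.cost_third_of_not_adj hn
  have := h.cost_fourth_of_not_adj hn
  linarith [h.pos]

end Opposite

/-! ### The first two projects are neighbours -/

section Tail

variable {r₃ r₄ : Fin 4}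

lemma cost_third_eq_of_adj (h : IsNERun tb β c q₁ q₂ q₃ q₄) (h₃₄ : Adj q₃ q₄)
    (h₃ : Adj q₃ r₃) (hr₃ : r₃ ≠ q₄) (hu : money β c [q₂, q₁] (shared q₃ r₃) ≤ 2 * β / 5) :
    c q₃ = money β c [q₂, q₁] (shared q₃ r₃) + 4 * coef exA19 c (money β c [q₂, q₁]) q₃ ∧
      coef exA19 c (money β c [q₂, q₁]) q₃ ≤ β := by
  obtain ⟨-, h₁₃, -, h₂₃, -, -⟩ := ne_of_nodup h.nodup
  have ha := h.sel₃.2.1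
  have hle := ha.coef_le (approvers_nonempty q₃) fun v _ => h.money_le _ v
  have hge := ha.cost_le_card_mul_coef (approvers_nonempty q₃)
  rw [card_approvers, Nat.cast_ofNat] at hge
  have hex : ∀ v ∈ excl q₃, money β c [q₂, q₁] v = β := fun v hv =>
    money_excl hv (by simp [h₁₃.symm, h₂₃.symm])
  have hloc := local_eq_of_affordable h₃ h₃₄ hr₃ hex ha
  rw [money_shared h₃₄ (by simp [h₁₃.symm, h₂₃.symm]) (by simp [h.ne₁₄.symm, h.ne₂₄.symm]),
    min_eq_right hle] at hloc
  have := h.three_mul_le q₃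
  rw [min_eq_left (by linarith)] at hloc
  exact ⟨by linarith, hle⟩

lemma cost_fourth_eq_of_adj (h : IsNERun tb β c q₁ q₂ q₃ q₄) (h₃₄ : Adj q₃ q₄)
    (h₄ : Adj q₄ r₄) (hr₄ : r₄ ≠ q₃) (hα : coef exA19 c (money β c [q₂, q₁]) q₃ ≤ β) :
    c q₄ = money β c [q₂, q₁] (shared q₄ r₄) + 4 * β -
      coef exA19 c (money β c [q₂, q₁]) q₃ := by
  have hex : ∀ v ∈ excl q₄, money β c [q₃, q₂, q₁] v = β := fun v hv =>
    money_excl hv (by simp [h.ne₁₄.symm, h.ne₂₄.symm, h₃₄.ne.symm])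
  rw [h.cost_last, sum_approvers_local h₄ h₃₄.symm hr₄ hex, money,
    pay_shared_of_ne h₄ h₃₄.ne (Ne.symm hr₄), shared_comm q₄ q₃,
    pay_of_mem ((shared_mem_approvers_iff h₃₄).2 (Or.inl rfl)),
    money_shared h₃₄ (by simp [h.ne₁₃.symm, h.ne₂₃.symm]) (by simp [h.ne₁₄.symm, h.ne₂₄.symm]),
    min_eq_right hα]
  ring

lemma coef_fourth_eq_of_adj (h : IsNERun tb β c q₁ q₂ q₃ q₄) (h₃₄ : Adj q₃ q₄)
    (h₄ : Adj q₄ r₄) (hr₄ : r₄ ≠ q₃) (hw : money β c [q₂, q₁] (shared q₄ r₄) ≤ 2 * β / 5)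
    (hα : coef exA19 c (money β c [q₂, q₁]) q₃ ≤ β) :
    coef exA19 c (money β c [q₂, q₁]) q₄ = β - coef exA19 c (money β c [q₂, q₁]) q₃ / 4 ∧
      Affordable exA19 c (money β c [q₂, q₁]) q₄ := by
  have hα₀ := coef_nonneg (cost := c) (b := money β c [q₂, q₁]) (approvers_nonempty q₃)
    (by linarith [h.three_mul_le q₃, h.pos])
  have hex : ∀ v ∈ excl q₄, money β c [q₂, q₁] v = β := fun v hv =>
    money_excl hv (by simp [h.ne₁₄.symm, h.ne₂₄.symm])
  refine coef_eq_of_local h₄ h₃₄.symm hr₄ hex (by linarith) ?_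
  rw [shared_comm q₄ q₃,
    money_shared h₃₄ (by simp [h.ne₁₃.symm, h.ne₂₃.symm]) (by simp [h.ne₁₄.symm, h.ne₂₄.symm]),
    min_eq_left (by linarith [h.pos]), min_eq_right (by linarith),
    h.cost_fourth_eq_of_adj h₃₄ h₄ hr₄ hα]
  ring

lemma cost_third_ge_of_adj (h : IsNERun tb β c q₁ q₂ q₃ q₄) (h₃₄ : Adj q₃ q₄)
    (h₃ : Adj q₃ r₃) (hr₃ : r₃ ≠ q₄) (h₄ : Adj q₄ r₄) (hr₄ : r₄ ≠ q₃)
    (hw : money β c [q₂, q₁] (shared q₄ r₄) ≤ 2 * β / 5)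
    (hα : coef exA19 c (money β c [q₂, q₁]) q₃ ≤ β) :
    money β c [q₂, q₁] (shared q₃ r₃) + coef exA19 c (money β c [q₂, q₁]) q₃ / 4 + 3 * β ≤
      c q₃ := by
  obtain ⟨hα₄, ha₄⟩ := h.coef_fourth_eq_of_adj h₃₄ h₄ hr₄ hw hα
  have hα₀ := coef_nonneg (cost := c) (b := money β c [q₂, q₁]) (approvers_nonempty q₃)
    (by linarith [h.three_mul_le q₃, h.pos])
  have hsel₄ : IsSelected exA19 tb c (((univ.erase q₁).erase q₂).erase q₃)
      (money β c [q₂, q₁]) q₄ := by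
    refine ⟨h.sel₄.1, ha₄, fun r hr hr₄ _ => ?_⟩
    simp only [mem_erase, mem_univ, and_true] at hr
    obtain rfl | rfl | rfl | rfl := h.eq_or_eq_or_eq_or_eq r <;> simp_all
  have hm : money β c [q₄, q₂, q₁] (shared q₃ q₄) = coef exA19 c (money β c [q₂, q₁]) q₃ / 4 := by
    rw [money, pay_of_mem ((shared_mem_approvers_iff h₃₄).2 (Or.inr rfl)),
      money_shared h₃₄ (by simp [h.ne₁₃.symm, h.ne₂₃.symm]) (by simp [h.ne₁₄.symm, h.ne₂₄.symm]),
      hα₄, min_eq_right (by linarith)]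
    ring
  have hex : ∀ v ∈ excl q₃, money β c [q₄, q₂, q₁] v = β := fun v hv =>
    money_excl hv (by simp [h.ne₁₃.symm, h.ne₂₃.symm, h.ne₃₄])
  have hpool : ∑ v ∈ approvers exA19 q₃, money β c [q₄, q₂, q₁] v =
      money β c [q₂, q₁] (shared q₃ r₃) + coef exA19 c (money β c [q₂, q₁]) q₃ / 4 + 3 * β := by
    rw [sum_approvers_local h₃ h₃₄ hr₃ hex, hm, money, pay_shared_of_ne h₃ h₃₄.ne.symm hr₃.symm]
  have hx := money_nonneg (c := c) h.pos.le [q₂, q₁] (shared q₃ r₃)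
  refine h.stable q₃ _ (by linarith) ?_
  refine mem_run_update_of_isSelected (h.sel₁.erase h.ne₁₃) ?_
  refine mem_run_update_of_isSelected (h.sel₂.erase h.ne₂₃) ?_
  refine mem_run_update_of_isSelected hsel₄ ?_
  refine mem_run_of_pool (by simp [h.ne₁₃.symm, h.ne₂₃.symm, h.ne₃₄])
    (by rw [Function.update_self]; linarith) (money_nonneg (c := c) h.pos.le [q₄, q₂, q₁])
    subset_rfl (fun q hq hq₃ => ?_) (by rw [Function.update_self]; exact hpool.ge)
  simp only [mem_erase, mem_univ, and_true] at hq
  obtain rfl | rfl | rfl | rfl := h.eq_or_eq_or_eq_or_eq q <;> simp_all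

lemma third_fourth_of_adj (h : IsNERun tb β c q₁ q₂ q₃ q₄) (h₃₄ : Adj q₃ q₄)
    (h₃ : Adj q₃ r₃) (hr₃ : r₃ ≠ q₄) (h₄ : Adj q₄ r₄) (hr₄ : r₄ ≠ q₃)
    (hu : money β c [q₂, q₁] (shared q₃ r₃) ≤ 2 * β / 5)
    (hw : money β c [q₂, q₁] (shared q₄ r₄) ≤ 2 * β / 5) :
    coef exA19 c (money β c [q₂, q₁]) q₃ = 4 * β / 5 ∧
      coef exA19 c (money β c [q₂, q₁]) q₄ = 4 * β / 5 ∧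
      c q₃ = money β c [q₂, q₁] (shared q₃ r₃) + 16 * β / 5 ∧
      c q₄ = money β c [q₂, q₁] (shared q₄ r₄) + 16 * β / 5 := by
  obtain ⟨hc₃, hα⟩ := h.cost_third_eq_of_adj h₃₄ h₃ hr₃ hu
  have hc₄ := h.cost_fourth_eq_of_adj h₃₄ h₄ hr₄ hα
  obtain ⟨hα₄, ha₄⟩ := h.coef_fourth_eq_of_adj h₃₄ h₄ hr₄ hw hα
  have hge := h.cost_third_ge_of_adj h₃₄ h₃ hr₃ h₄ hr₄ hw hα
  have hle := coef_le_of_key_le (h.sel₃.2.2 q₄ (by simp [h.ne₁₄.symm, h.ne₂₄.symm])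
    h₃₄.ne.symm ha₄)
  rw [hα₄] at hle
  have hα₃ : coef exA19 c (money β c [q₂, q₁]) q₃ = 4 * β / 5 := by linarith
  refine ⟨hα₃, ?_, ?_, ?_⟩ <;> [rw [hα₄, hα₃]; rw [hc₃, hα₃]; rw [hc₄, hα₃]] <;> ring

end Tail

section Adjacent

variable {Y Z : Fin 4}

lemma coef_second_of_adj (h : IsNERun tb β c q₁ q₂ q₃ q₄) (h₁₂ : Adj q₁ q₂) (hZ : Adj q₂ Z)
    (hZ₁ : Z ≠ q₁) :
    c q₂ = β - c q₁ / 5 + 4 * coef exA19 c (money β c [q₁]) q₂ ∧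
      3 * β / 5 ≤ coef exA19 c (money β c [q₁]) q₂ ∧ coef exA19 c (money β c [q₁]) q₂ ≤ β := by
  have ha := h.sel₂.2.1
  have hle := ha.coef_le (approvers_nonempty q₂) fun v _ => h.money_le [q₁] v
  have hge := ha.cost_le_card_mul_coef (approvers_nonempty q₂)
  rw [card_approvers, Nat.cast_ofNat] at hge
  have hex : ∀ v ∈ excl q₂, money β c [q₁] v = β := fun v hv =>
    money_excl hv (by simpa using h.ne₁₂.symm)
  have hloc := local_eq_of_affordable h₁₂.symm hZ (Ne.symm hZ₁) hex ha
  have hZ' : shared q₂ Z ∉ approvers exA19 q₁ := fun hm =>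
    ((shared_mem_approvers_iff hZ).1 hm).elim (fun e => h.ne₁₂ e) (fun e => hZ₁ e.symm)
  rw [shared_comm q₂ q₁, h.money_first_of_mem ((shared_mem_approvers_iff h₁₂).2 (Or.inl rfl)),
    h.money_first_of_not_mem hZ', min_eq_right hle] at hloc
  have := h.three_mul_le q₁
  have := h.three_mul_le q₂
  rw [min_eq_left (by linarith)] at hloc
  exact ⟨by linarith, by linarith, hle⟩

lemma money_two_of_adj (h : IsNERun tb β c q₁ q₂ q₃ q₄) (h₁₂ : Adj q₁ q₂) (hY : Adj q₁ Y)
    (hY₂ : Y ≠ q₂) (hZ : Adj q₂ Z) (hZ₁ : Z ≠ q₁) :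
    money β c [q₂, q₁] (shared q₁ Y) = β - c q₁ / 5 ∧
      money β c [q₂, q₁] (shared q₂ Z) = β - coef exA19 c (money β c [q₁]) q₂ := by
  constructor
  · rw [money, pay_shared_of_ne hY h₁₂.ne.symm (Ne.symm hY₂),
      h.money_first_of_mem ((shared_mem_approvers_iff hY).2 (Or.inl rfl))]
  · have hZ' : shared q₂ Z ∉ approvers exA19 q₁ := fun hm =>
      ((shared_mem_approvers_iff hZ).1 hm).elim (fun e => h.ne₁₂ e) (fun e => hZ₁ e.symm)
    rw [money, pay_of_mem ((shared_mem_approvers_iff hZ).2 (Or.inl rfl)),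
      h.money_first_of_not_mem hZ', min_eq_right (h.coef_second_of_adj h₁₂ hZ hZ₁).2.2]

lemma coef_other_of_adj (h : IsNERun tb β c q₁ q₂ q₃ q₄) (hd : [q₁, q₂, Y, Z].Nodup)
    (hnZ : ¬ Adj q₁ Z) :
    (∀ v ∈ approvers exA19 Z, money β c [q₁] v = β) ∧
      coef exA19 c (money β c [q₁]) Z = c Z / 5 ∧ Affordable exA19 c (money β c [q₁]) Z := by
  have hfull : ∀ v ∈ approvers exA19 Z, money β c [q₁] v = β := fun v hv =>
    h.money_first_of_not_mem
      (disjoint_right.1 (disjoint_of_not_adj (ne_of_nodup hd).2.2.1 hnZ) hv)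
  exact ⟨hfull, coef_of_full hfull (h.le_five_mul Z)⟩

lemma isSelected_other_of_adj (h : IsNERun tb β c q₁ q₂ q₃ q₄)
    (hd : [q₁, q₂, Y, Z].Nodup) (hnZ : ¬ Adj q₁ Z)
    (hαY : coef exA19 c (money β c [q₁]) Y = 4 * β / 5) (hcZ : c Z < 4 * β) :
    IsSelected exA19 tb c ((univ.erase q₁).erase q₂) (money β c [q₁]) Z := by
  obtain ⟨-, -, h₁Z, -, h₂Z, -⟩ := ne_of_nodup hd
  obtain ⟨-, hαZ, haZ⟩ := h.coef_other_of_adj hd hnZ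
  refine ⟨by simp [h₁Z.symm, h₂Z.symm], haZ, fun r hr hrZ _ => key_le_of_coef_lt ?_⟩
  obtain rfl | rfl | rfl | rfl := eq_or_eq_or_eq_or_eq_of_nodup hd r
  · simp at hr
  · simp at hr
  · rw [hαZ, hαY]; linarith
  · exact absurd rfl hrZ

lemma sum_money_other_of_adj (h : IsNERun tb β c q₁ q₂ q₃ q₄) (h₁₂ : Adj q₁ q₂)
    (hd : [q₁, q₂, Y, Z].Nodup) (hZ : Adj q₂ Z) (hnZ : ¬ Adj q₁ Z) :
    ∑ v ∈ approvers exA19 q₂, money β c [Z, q₁] v = 5 * β - c q₁ / 5 - c Z / 5 := by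
  obtain ⟨-, -, h₁Z, -, h₂Z, -⟩ := ne_of_nodup hd
  obtain ⟨hfull, hαZ, -⟩ := h.coef_other_of_adj hd hnZ
  have hmZ := (shared_mem_approvers_iff hZ).2 (Or.inr rfl)
  have hm₁ : money β c [Z, q₁] (shared q₂ q₁) = β - c q₁ / 5 := by
    rw [money, pay_shared_of_ne h₁₂.symm h₂Z.symm h₁Z.symm, shared_comm,
      h.money_first_of_mem ((shared_mem_approvers_iff h₁₂).2 (Or.inl rfl))]
  have hm₂ : money β c [Z, q₁] (shared q₂ Z) = β - c Z / 5 := by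
    rw [money, pay_of_mem hmZ, hαZ, hfull _ hmZ, min_eq_right (by linarith [h.le_five_mul Z])]
  have hex : ∀ v ∈ excl q₂, money β c [Z, q₁] v = β := fun v hv =>
    money_excl hv (by simp [h₂Z, h.ne₁₂.symm])
  rw [sum_approvers_local h₁₂.symm hZ h₁Z hex, hm₁, hm₂]
  ring

lemma cost_second_ge_of_adj (h : IsNERun tb β c q₁ q₂ q₃ q₄) (h₁₂ : Adj q₁ q₂)
    (hd : [q₁, q₂, Y, Z].Nodup) (hZ : Adj q₂ Z) (hnY : ¬ Adj q₂ Y) (hnZ : ¬ Adj q₁ Z)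
    (hαY : coef exA19 c (money β c [q₁]) Y = 4 * β / 5) (hcZ : c Z < 4 * β) :
    5 * β - c q₁ / 5 - c Z / 5 ≤ c q₂ := by
  obtain ⟨-, -, -, h₂Y, h₂Z, -⟩ := ne_of_nodup hd
  have hpool := h.sum_money_other_of_adj h₁₂ hd hZ hnZ
  have hx : 0 ≤ 5 * β - c q₁ / 5 - c Z / 5 := by linarith [h.pos, h.le_five_mul q₁, h.le_five_mul Z]
  refine h.stable q₂ _ hx ?_
  refine mem_run_update_of_isSelected (h.sel₁.erase h.ne₁₂) ?_
  refine mem_run_update_of_isSelected (h.isSelected_other_of_adj hd hnZ hαY hcZ) ?_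
  refine mem_run_of_pool (by simp [h₂Z, h.ne₁₂.symm]) (by rwa [Function.update_self])
    (money_nonneg (c := c) h.pos.le [Z, q₁]) subset_rfl (fun q hq hq₂ => ?_)
    (by rw [Function.update_self]; exact hpool.ge)
  obtain rfl | rfl | rfl | rfl := eq_or_eq_or_eq_or_eq_of_nodup hd q
  · simp at hq
  · exact absurd rfl hq₂
  · exact disjoint_of_not_adj h₂Y hnY
  · simp at hq

lemma exists_costs_of_adj (h : IsNERun tb β c q₁ q₂ q₃ q₄) (h₁₂ : Adj q₁ q₂) :
    ∃ Y Z, [q₁, q₂, Y, Z].Nodup ∧ Adj q₁ Y ∧ Adj q₂ Z ∧ Adj Y Z ∧ ¬ Adj q₂ Y ∧ ¬ Adj q₁ Z ∧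
      c Y = β - c q₁ / 5 + 16 * β / 5 ∧
      c Z = β - coef exA19 c (money β c [q₁]) q₂ + 16 * β / 5 := by
  have := h.three_mul_le q₁
  by_cases h₁₃ : Adj q₁ q₃
  · obtain ⟨hn₁₄, hn₂₃, h₂₄, h₃₄⟩ := adj_of_adj_of_adj h.nodup h₁₂ h₁₃
    obtain ⟨hm₁, hm₂⟩ := h.money_two_of_adj h₁₂ h₁₃ h.ne₂₃.symm h₂₄ h.ne₁₄.symm
    obtain ⟨-, hα, -⟩ := h.coef_second_of_adj h₁₂ h₂₄ h.ne₁₄.symm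
    rw [shared_comm q₁ q₃] at hm₁
    rw [shared_comm q₂ q₄] at hm₂
    obtain ⟨-, -, hc₃, hc₄⟩ := h.third_fourth_of_adj h₃₄ h₁₃.symm h.ne₁₄ h₂₄.symm h.ne₂₃
      (by rw [hm₁]; linarith) (by rw [hm₂]; linarith)
    exact ⟨q₃, q₄, h.nodup, h₁₃, h₂₄, h₃₄, hn₂₃, hn₁₄, by rw [hc₃, hm₁], by rw [hc₄, hm₂]⟩
  · have hd : [q₁, q₃, q₂, q₄].Nodup := by
      simp [h.ne₁₂, h.ne₁₃, h.ne₁₄, h.ne₂₃.symm, h.ne₂₄, h.ne₃₄]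
    obtain ⟨-, h₁₄, h₃₂, h₃₄, hn₂₄⟩ := adj_of_not_adj hd h₁₃
    obtain ⟨hm₁, hm₂⟩ := h.money_two_of_adj h₁₂ h₁₄ h.ne₂₄.symm h₃₂.symm h.ne₁₃.symm
    obtain ⟨-, hα, -⟩ := h.coef_second_of_adj h₁₂ h₃₂.symm h.ne₁₃.symm
    rw [shared_comm q₁ q₄] at hm₁
    rw [shared_comm q₂ q₃] at hm₂
    obtain ⟨-, -, hc₃, hc₄⟩ := h.third_fourth_of_adj h₃₄ h₃₂ h.ne₂₄ h₁₄.symm h.ne₁₃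
      (by rw [hm₂]; linarith) (by rw [hm₁]; linarith)
    exact ⟨q₄, q₃, by simp [h.ne₁₂, h.ne₁₃, h.ne₁₄, h.ne₂₃, h.ne₂₄, h.ne₃₄.symm], h₁₄,
      h₃₂.symm, h₃₄.symm, hn₂₄, h₁₃, by rw [hc₄, hm₁], by rw [hc₃, hm₂]⟩

lemma false_of_adj (h : IsNERun tb β c q₁ q₂ q₃ q₄) (h₁₂ : Adj q₁ q₂) : False := by
  obtain ⟨Y, Z, hd, hY, hZ, hYZ, hnY, hnZ, hcY, hcZ⟩ := h.exists_costs_of_adj h₁₂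
  obtain ⟨-, h₁Y, h₁Z, h₂Y, -, -⟩ := ne_of_nodup hd
  obtain ⟨hc₂, hα, -⟩ := h.coef_second_of_adj h₁₂ hZ h₁Z.symm
  have := h.pos
  have := h.three_mul_le q₁
  have hex : ∀ v ∈ excl Y, money β c [q₁] v = β := fun v hv =>
    money_excl hv (by simpa using h₁Y.symm)
  have hsum : min (money β c [q₁] (shared Y q₁)) (4 * β / 5) +
      min (money β c [q₁] (shared Y Z)) (4 * β / 5) + 3 * min β (4 * β / 5) = c Y := by
    rw [shared_comm, h.money_first_of_mem ((shared_mem_approvers_iff hY).2 (Or.inl rfl)),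
      money_shared hYZ (by simpa using h₁Y.symm) (by simpa using h₁Z.symm),
      min_eq_left (by linarith), min_eq_right (by linarith), hcY]
    ring
  obtain ⟨hαY, haY⟩ := coef_eq_of_local hY.symm hYZ h₁Z hex (by linarith) hsum
  have hle := coef_le_of_key_le (h.sel₂.2.2 Y (by simp [h₁Y.symm]) h₂Y.symm haY)
  rw [hαY] at hle
  have := h.cost_second_ge_of_adj h₁₂ hd hZ hnY hnZ hαY (by linarith)
  linarith

end Adjacent

end IsNERun

end ExA19

/-- For every budget `B > 0` and every tie-breaking order, the
four-project, sixteen-voter game with zero delivery costs has no MES-Apr-Nash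
equilibrium. -/
theorem mesApr_no_NE_example_four_projects (B : ℝ) (hB : 0 < B) (tb : Fin 4 ↪ ℕ) :
    ¬ ∃ c : Fin 4 → ℝ, PB.isNE (PB.mesApr exA19 tb B) (fun _ => 0) c := by
  rintro ⟨c, hc⟩
  obtain ⟨q₁, q₂, q₃, q₄, h⟩ := ExA19.exists_isNERun hB hc
  by_cases h₁₂ : ExA19.Adj q₁ q₂
  · exact h.false_of_adj h₁₂
  · exact h.false_of_not_adj h₁₂
end
end
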